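/- arXiv:2302.05069 — 13 statements merged into one kernel-verified Lean document; each statement's English description precedes it below -/
import Mathlib

section
/- Let I be a partial order satisfying: (i) any two elements have a greatest lower bound, (ii) any two elements with an upper bound have a least upper bound, (iii) of any three elements, two have an upper bound, and (iv) the distributive laws hold whenever both sides exist. Suppose I has no maximal element; adjoin a new top element ℓ to form J = I ∪ {ℓ}. Then J is a distributive lattice if and only if I additionally satisfies: (v) if i and j have no upper bound and j' is arbitrary, then either neither i, j' nor i, j ∧ j' have an upper bound, or i ∨ j' = i ∨ (j ∧ j'), and (vi) if j, j' have no upper bound, then (i ∧ j) ∨ (i ∧ j') = i for any i. -/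
/-! In `WithTop I` every pair has a least upper bound: its join in `I` if the pair is bounded
there, and `⊤` otherwise. For elements of `I` whose relevant joins exist in `I`, the two
distributive laws of `WithTop I` are the partial laws (iv); the cases in which some join is `⊤`
are exactly what (v) and (vi) say. Conversely, evaluating the distributive laws of `WithTop I`
at a pair without upper bound in `I` gives back (v) and (vi). -/

/-- A partial order with all binary meets satisfying axioms (i)-(iv) of a
distributive almost-lattice: joins exist for pairs with an upper bound,
of any three elements two have an upper bound, and the distributive laws
hold whenever both sides exist. -/
structure AlmostLattice (I : Type*) [SemilatticeInf I] : Prop where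
  join_exists : ∀ i j : I, (∃ k, i ≤ k ∧ j ≤ k) → ∃ k, IsLUB {i, j} k
  two_of_three : ∀ i₀ i₁ i₂ : I,
    (∃ k, i₀ ≤ k ∧ i₁ ≤ k) ∨ (∃ k, i₀ ≤ k ∧ i₂ ≤ k) ∨ (∃ k, i₁ ≤ k ∧ i₂ ≤ k)
  distrib_join : ∀ i j j' a b c : I, IsLUB {i, j} a → IsLUB {i, j'} b →
    IsLUB {i, j ⊓ j'} c → c = a ⊓ b
  distrib_meet : ∀ i j j' a b : I, IsLUB {j, j'} a →
    IsLUB {i ⊓ j, i ⊓ j'} b → b = i ⊓ a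

/-- Property (v): if `i` and `j` have no upper bound and `j'` is arbitrary, then either
neither `i, j'` nor `i, j ⊓ j'` have an upper bound, or `i ∨ j' = i ∨ (j ⊓ j')`. -/
def PropFive (I : Type*) [SemilatticeInf I] : Prop :=
  ∀ i j j' : I, ¬ (∃ k, i ≤ k ∧ j ≤ k) →
    ((¬ ∃ k, i ≤ k ∧ j' ≤ k) ∧ ¬ ∃ k, i ≤ k ∧ j ⊓ j' ≤ k) ∨
    (∃ k, IsLUB {i, j'} k ∧ IsLUB {i, j ⊓ j'} k)

/-- Property (vi): if `j, j'` have no upper bound, then `(i ⊓ j) ∨ (i ⊓ j') = i` for any `i`. -/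
def PropSix (I : Type*) [SemilatticeInf I] : Prop :=
  ∀ i j j' : I, ¬ (∃ k, j ≤ k ∧ j' ≤ k) → IsLUB {i ⊓ j, i ⊓ j'} i

theorem isLUB_pair_iff {α : Type*} [Preorder α] {a b c : α} :
    IsLUB {a, b} c ↔ a ≤ c ∧ b ≤ c ∧ ∀ d, a ≤ d → b ≤ d → c ≤ d := by
  simp [IsLUB, IsLeast, upperBounds_insert, lowerBounds, and_assoc]

theorem isLUB_pair_of_le {α : Type*} [Preorder α] {a b : α} (h : b ≤ a) : IsLUB {a, b} a :=
  isLUB_pair_iff.2 ⟨le_rfl, h, fun _ hd _ => hd⟩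

namespace WithTop

variable {I : Type*} [Preorder I] {i j k : I}

theorem isLUB_pair_coe_iff : IsLUB {(i : WithTop I), ↑j} ↑k ↔ IsLUB {i, j} k := by
  simp [isLUB_pair_iff, WithTop.forall]

theorem isLUB_pair_top_iff : IsLUB {(i : WithTop I), ↑j} ⊤ ↔ ¬∃ k, i ≤ k ∧ j ≤ k := by
  simp [isLUB_pair_iff, WithTop.forall]

end WithTop

section

variable {I : Type*} [SemilatticeInf I]

theorem PropFive.isLUB_withTop_coe_inf (h5 : PropFive I) {i j k : I} {q : WithTop I}
    (hij : ¬∃ m, i ≤ m ∧ j ≤ m) (hq : IsLUB {(i : WithTop I), ↑k} q) :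
    IsLUB {(i : WithTop I), ↑(j ⊓ k)} q := by
  rcases h5 i j k hij with ⟨hik, hijk⟩ | ⟨m, hm, hm'⟩
  · rw [hq.unique (WithTop.isLUB_pair_top_iff.2 hik)]
    exact WithTop.isLUB_pair_top_iff.2 hijk
  · rw [hq.unique (WithTop.isLUB_pair_coe_iff.2 hm)]
    exact WithTop.isLUB_pair_coe_iff.2 hm'

namespace AlmostLattice

theorem exists_isLUB_withTop (hal : AlmostLattice I) (a b : WithTop I) :
    ∃ c, IsLUB {a, b} c := by
  induction a using WithTop.recTopCoe with
  | top => exact ⟨⊤, isLUB_pair_of_le le_top⟩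
  | coe i =>
    induction b using WithTop.recTopCoe with
    | top => exact ⟨⊤, Set.pair_comm (⊤ : WithTop I) _ ▸ isLUB_pair_of_le le_top⟩
    | coe j =>
      by_cases h : ∃ k, i ≤ k ∧ j ≤ k
      · obtain ⟨k, hk⟩ := hal.join_exists i j h
        exact ⟨k, WithTop.isLUB_pair_coe_iff.2 hk⟩
      · exact ⟨⊤, WithTop.isLUB_pair_top_iff.2 h⟩

theorem isLUB_withTop_inf_pair (hal : AlmostLattice I) (h6 : PropSix I) {a b c s : WithTop I}
    (hs : IsLUB {b, c} s) : IsLUB {a ⊓ b, a ⊓ c} (a ⊓ s) := by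
  induction a using WithTop.recTopCoe with
  | top => simpa using hs
  | coe i =>
    induction b using WithTop.recTopCoe with
    | top =>
      obtain rfl : s = ⊤ := top_le_iff.1 (hs.1 (by simp))
      simpa using isLUB_pair_of_le inf_le_left
    | coe j =>
      induction c using WithTop.recTopCoe with
      | top =>
        obtain rfl : s = ⊤ := top_le_iff.1 (hs.1 (by simp))
        simpa [Set.pair_comm] using isLUB_pair_of_le inf_le_left
      | coe k =>
        simp only [← WithTop.coe_inf]
        induction s using WithTop.recTopCoe with
        | top =>
          rw [inf_top_eq]
          exact WithTop.isLUB_pair_coe_iff.2 (h6 i j k (WithTop.isLUB_pair_top_iff.1 hs))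
        | coe m =>
          have hm := WithTop.isLUB_pair_coe_iff.1 hs
          obtain ⟨hjm, hkm, -⟩ := isLUB_pair_iff.1 hm
          obtain ⟨t, ht⟩ := hal.join_exists (i ⊓ j) (i ⊓ k)
            ⟨m, inf_le_of_right_le hjm, inf_le_of_right_le hkm⟩
          rw [← WithTop.coe_inf, ← hal.distrib_meet i j k m t hm ht]
          exact WithTop.isLUB_pair_coe_iff.2 ht

theorem isLUB_withTop_pair_inf (hal : AlmostLattice I) (h5 : PropFive I)
    {a b c p q : WithTop I} (hp : IsLUB {a, b} p) (hq : IsLUB {a, c} q) :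
    IsLUB {a, b ⊓ c} (p ⊓ q) := by
  induction a using WithTop.recTopCoe with
  | top =>
    obtain rfl : p = ⊤ := top_le_iff.1 (hp.1 (by simp))
    obtain rfl : q = ⊤ := top_le_iff.1 (hq.1 (by simp))
    simpa using isLUB_pair_of_le le_top
  | coe i =>
    induction b using WithTop.recTopCoe with
    | top =>
      obtain rfl : p = ⊤ := top_le_iff.1 (hp.1 (by simp))
      simpa using hq
    | coe j =>
      induction c using WithTop.recTopCoe with
      | top =>
        obtain rfl : q = ⊤ := top_le_iff.1 (hq.1 (by simp))
        simpa using hp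
      | coe k =>
        rw [← WithTop.coe_inf]
        induction p using WithTop.recTopCoe with
        | top =>
          rw [top_inf_eq]
          exact h5.isLUB_withTop_coe_inf (WithTop.isLUB_pair_top_iff.1 hp) hq
        | coe p =>
          induction q using WithTop.recTopCoe with
          | top =>
            rw [inf_top_eq, inf_comm j k]
            exact h5.isLUB_withTop_coe_inf (WithTop.isLUB_pair_top_iff.1 hq) hp
          | coe q =>
            have hp := WithTop.isLUB_pair_coe_iff.1 hp
            have hq := WithTop.isLUB_pair_coe_iff.1 hq
            obtain ⟨hip, hjp, -⟩ := isLUB_pair_iff.1 hp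
            obtain ⟨r, hr⟩ := hal.join_exists i (j ⊓ k) ⟨p, hip, inf_le_of_left_le hjp⟩
            rw [← WithTop.coe_inf, ← hal.distrib_join i j k p q r hp hq hr]
            exact WithTop.isLUB_pair_coe_iff.2 hr

end AlmostLattice

section Converse

variable {jsup : WithTop I → WithTop I → WithTop I}

theorem propSix_of_inf_sup_left (hlub : ∀ a b, IsLUB {a, b} (jsup a b))
    (hdistrib : ∀ a b c, a ⊓ jsup b c = jsup (a ⊓ b) (a ⊓ c)) : PropSix I := by
  intro i j k hjk
  have htop : jsup ↑j ↑k = ⊤ := (hlub _ _).unique (WithTop.isLUB_pair_top_iff.2 hjk)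
  have hi := hlub ↑(i ⊓ j) ↑(i ⊓ k)
  rw [WithTop.coe_inf, WithTop.coe_inf, ← hdistrib, htop, inf_top_eq] at hi
  exact WithTop.isLUB_pair_coe_iff.1 hi

theorem propFive_of_sup_inf_left (hlub : ∀ a b, IsLUB {a, b} (jsup a b))
    (hdistrib : ∀ a b c, jsup a (b ⊓ c) = jsup a b ⊓ jsup a c) : PropFive I := by
  intro i j k hij
  have htop : jsup ↑i ↑j = ⊤ := (hlub _ _).unique (WithTop.isLUB_pair_top_iff.2 hij)
  have hk := hlub ↑i ↑k
  have hjk := hlub ↑i ↑(j ⊓ k)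
  rw [WithTop.coe_inf, hdistrib, htop, top_inf_eq] at hjk
  generalize jsup ↑i ↑k = q at hk hjk
  induction q using WithTop.recTopCoe with
  | top => exact .inl ⟨WithTop.isLUB_pair_top_iff.1 hk, WithTop.isLUB_pair_top_iff.1 hjk⟩
  | coe m => exact .inr ⟨m, WithTop.isLUB_pair_coe_iff.1 hk, WithTop.isLUB_pair_coe_iff.1 hjk⟩

end Converse

end

theorem stmt0_general {I : Type*} [SemilatticeInf I] (hal : AlmostLattice I) :
    (PropFive I ∧ PropSix I) ↔
      ∃ jsup : WithTop I → WithTop I → WithTop I,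
        (∀ a b : WithTop I, IsLUB {a, b} (jsup a b)) ∧
        (∀ a b c : WithTop I, a ⊓ jsup b c = jsup (a ⊓ b) (a ⊓ c)) ∧
        (∀ a b c : WithTop I, jsup a (b ⊓ c) = jsup a b ⊓ jsup a c) := by
  constructor
  · rintro ⟨h5, h6⟩
    choose jsup hjsup using hal.exists_isLUB_withTop
    refine ⟨jsup, hjsup, fun a b c => ?_, fun a b c => ?_⟩
    · exact (hal.isLUB_withTop_inf_pair h6 (hjsup b c)).unique (hjsup _ _)
    · exact (hjsup _ _).unique (hal.isLUB_withTop_pair_inf h5 (hjsup a b) (hjsup a c))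
  · rintro ⟨jsup, hlub, hinf_sup, hsup_inf⟩
    exact ⟨propFive_of_sup_inf_left hlub hsup_inf, propSix_of_inf_sup_left hlub hinf_sup⟩

/-- If `I` satisfies (i)-(iv) and has no maximal element, then `J = I ∪ {ℓ}` (modelled
as `WithTop I`) is a distributive lattice iff `I` satisfies (v) and (vi). -/
theorem stmt0 {I : Type*} [SemilatticeInf I] (hal : AlmostLattice I)
    (hnomax : ∀ i : I, ∃ j, i < j) :
    (PropFive I ∧ PropSix I) ↔
      ∃ jsup : WithTop I → WithTop I → WithTop I,
        (∀ a b : WithTop I, IsLUB {a, b} (jsup a b)) ∧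
        (∀ a b c : WithTop I, a ⊓ jsup b c = jsup (a ⊓ b) (a ⊓ c)) ∧
        (∀ a b c : WithTop I, jsup a (b ⊓ c) = jsup a b ⊓ jsup a c) :=
  stmt0_general hal
end

section
/- Let ⟨I, ≤⟩ be a distributive almost-lattice. Then there exist subsets L and R of I (the left and right parts) with kernel ker(I) = {i : i ∨ j exists for all j ∈ I} such that: (1) L and R are downward closed; (2) if i, j ∈ L then i ∨ j exists and belongs to L, and similarly for R; (3) I = L ∪ R and ker(I) = L ∩ R; (4) L \ ker(I) ≠ ∅ iff R \ ker(I) ≠ ∅; (5) if i ∈ L \ ker(I) and j ∈ R \ ker(I) then i ∨ j does not exist; (6) if i ∈ L and j ∈ R then i ∧ j ∈ ker(I). -/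
/-!
Fix `a`, `b` without a common upper bound (if there are none, take `L = R = I`), and let `L`
and `R` be the elements bounded together with `a`, resp. with `b`. Everything follows from
the three-element axiom: applied to `i, a, b` it puts `i` in `L ∪ R`; applied to `j` and upper
bounds of `i, a` and `i, b` it shows that an element of `L ∩ R` is bounded together with every
`j`; applied to `b` and upper bounds of `i, a` and `j, a` it bounds two elements of `L`
together with `a`; applied to an upper bound of `i, j` and `a, b` it shows that `i ∈ L \ R`
and `j ∈ R \ L` have no upper bound.
-/

open Set

/-- A distributive almost-lattice: a partial order with all binary meets such that
joins exist for pairs with an upper bound, of any three elements two have an upper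
bound, the distributive laws hold whenever both sides exist, and properties (v), (vi). -/
structure DistribAlmostLattice (I : Type*) [SemilatticeInf I] : Prop where
  join_exists : ∀ i j : I, (∃ k, i ≤ k ∧ j ≤ k) → ∃ k, IsLUB {i, j} k
  two_of_three : ∀ i₀ i₁ i₂ : I,
    (∃ k, i₀ ≤ k ∧ i₁ ≤ k) ∨ (∃ k, i₀ ≤ k ∧ i₂ ≤ k) ∨ (∃ k, i₁ ≤ k ∧ i₂ ≤ k)
  distrib_join : ∀ i j j' a b c : I, IsLUB {i, j} a → IsLUB {i, j'} b →
    IsLUB {i, j ⊓ j'} c → c = a ⊓ b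
  distrib_meet : ∀ i j j' a b : I, IsLUB {j, j'} a →
    IsLUB {i ⊓ j, i ⊓ j'} b → b = i ⊓ a
  no_ub_cases : ∀ i j j' : I, ¬ (∃ k, i ≤ k ∧ j ≤ k) →
    ((¬ ∃ k, i ≤ k ∧ j' ≤ k) ∧ ¬ ∃ k, i ≤ k ∧ j ⊓ j' ≤ k) ∨
    (∃ k, IsLUB {i, j'} k ∧ IsLUB {i, j ⊓ j'} k)
  meet_join_eq : ∀ i j j' : I, ¬ (∃ k, j ≤ k ∧ j' ≤ k) → IsLUB {i ⊓ j, i ⊓ j'} i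

section UpperBounded

variable {α : Type*} [Preorder α]

def UpperBounded (i j : α) : Prop := ∃ k, i ≤ k ∧ j ≤ k

def TwoOfThreeUpperBounded (α : Type*) [Preorder α] : Prop :=
  ∀ i₀ i₁ i₂ : α, UpperBounded i₀ i₁ ∨ UpperBounded i₀ i₂ ∨ UpperBounded i₁ i₂

theorem upperBounded_refl (i : α) : UpperBounded i i := ⟨i, le_rfl, le_rfl⟩

theorem UpperBounded.symm {i j : α} (h : UpperBounded i j) : UpperBounded j i :=
  let ⟨k, hik, hjk⟩ := h; ⟨k, hjk, hik⟩

theorem UpperBounded.mono_left {i i' j : α} (h : UpperBounded i j) (hi : i' ≤ i) :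
    UpperBounded i' j :=
  let ⟨k, hik, hjk⟩ := h; ⟨k, hi.trans hik, hjk⟩

theorem IsLUB.upperBounded {i j k : α} (hk : IsLUB {i, j} k) : UpperBounded i j :=
  ⟨k, hk.1 (by simp), hk.1 (by simp)⟩

theorem IsLUB.le_of_le_of_le {i j k u : α} (hk : IsLUB {i, j} k) (hi : i ≤ u) (hj : j ≤ u) :
    k ≤ u :=
  hk.2 (by simp [upperBounds_insert, hi, hj])

variable (h3 : TwoOfThreeUpperBounded α) {a b : α} (hab : ¬UpperBounded a b)
include h3 hab

theorem upperBounded_or_upperBounded (i : α) : UpperBounded i a ∨ UpperBounded i b := by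
  rcases h3 i a b with h | h | h
  exacts [Or.inl h, Or.inr h, absurd h hab]

theorem forall_upperBounded_of_upperBounded_both {i : α} (ha : UpperBounded i a)
    (hb : UpperBounded i b) (j : α) : UpperBounded i j := by
  obtain ⟨c, hic, hac⟩ := ha
  obtain ⟨e, hie, hbe⟩ := hb
  rcases h3 j c e with ⟨w, hjw, hcw⟩ | ⟨w, hjw, hew⟩ | ⟨w, hcw, hew⟩
  · exact ⟨w, hic.trans hcw, hjw⟩
  · exact ⟨w, hie.trans hew, hjw⟩
  · exact absurd ⟨w, hac.trans hcw, hbe.trans hew⟩ hab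

theorem exists_upper_bound_of_upperBounded {i j : α} (hi : UpperBounded i a)
    (hj : UpperBounded j a) : ∃ u, i ≤ u ∧ j ≤ u ∧ a ≤ u := by
  obtain ⟨c, hic, hac⟩ := hi
  obtain ⟨d, hjd, had⟩ := hj
  rcases h3 b c d with ⟨w, hbw, hcw⟩ | ⟨w, hbw, hdw⟩ | ⟨w, hcw, hdw⟩
  · exact absurd ⟨w, hac.trans hcw, hbw⟩ hab
  · exact absurd ⟨w, had.trans hdw, hbw⟩ hab
  · exact ⟨w, hic.trans hcw, hjd.trans hdw, hac.trans hcw⟩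

theorem not_upperBounded_of_not_upperBounded {i j : α} (hi : ¬UpperBounded i b)
    (hj : ¬UpperBounded j a) : ¬UpperBounded i j := by
  rintro ⟨k, hik, hjk⟩
  rcases h3 k a b with ⟨w, hkw, haw⟩ | ⟨w, hkw, hbw⟩ | hab'
  · exact hj ⟨w, hjk.trans hkw, haw⟩
  · exact hi ⟨w, hik.trans hkw, hbw⟩
  · exact hab hab'

end UpperBounded

namespace DistribAlmostLattice

variable {I : Type*} [SemilatticeInf I] (h : DistribAlmostLattice I) {a b : I}
  (hab : ¬UpperBounded a b)
include h hab

theorem exists_isLUB_upperBounded {i j : I} (hi : UpperBounded i a) (hj : UpperBounded j a) :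
    ∃ k, IsLUB {i, j} k ∧ UpperBounded k a := by
  obtain ⟨u, hiu, hju, hau⟩ := exists_upper_bound_of_upperBounded h.two_of_three hab hi hj
  obtain ⟨k, hk⟩ := h.join_exists i j ⟨u, hiu, hju⟩
  exact ⟨k, hk, u, hk.le_of_le_of_le hiu hju, hau⟩

theorem inter_eq_setOf_forall_exists_isLUB :
    {i | UpperBounded i a} ∩ {i | UpperBounded i b} = {i | ∀ j, ∃ k, IsLUB {i, j} k} := by
  ext i
  refine ⟨fun ⟨ha, hb⟩ j => h.join_exists i j ?_, fun hi => ?_⟩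
  · exact forall_upperBounded_of_upperBounded_both h.two_of_three hab ha hb j
  · exact ⟨(hi a).choose_spec.upperBounded, (hi b).choose_spec.upperBounded⟩

end DistribAlmostLattice

/-- Basic structure theorem for distributive almost-lattices: there are a left part `L`
and a right part `R` with kernel `L ∩ R = {i : i ∨ j exists for all j}` such that
`L` and `R` are downward closed and join-closed, `I = L ∪ R`, `L \ ker ≠ ∅ ↔ R \ ker ≠ ∅`,
elements of `L \ ker` and `R \ ker` have no join, and cross meets land in the kernel. -/
theorem stmt1 {I : Type*} [SemilatticeInf I] (h : DistribAlmostLattice I) :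
    ∃ L R : Set I,
      (∀ i ∈ L, ∀ j, j ≤ i → j ∈ L) ∧
      (∀ i ∈ R, ∀ j, j ≤ i → j ∈ R) ∧
      (∀ i ∈ L, ∀ j ∈ L, ∃ k, IsLUB {i, j} k ∧ k ∈ L) ∧
      (∀ i ∈ R, ∀ j ∈ R, ∃ k, IsLUB {i, j} k ∧ k ∈ R) ∧
      L ∪ R = Set.univ ∧
      L ∩ R = {i | ∀ j, ∃ k, IsLUB {i, j} k} ∧
      ((L \ (L ∩ R)).Nonempty ↔ (R \ (L ∩ R)).Nonempty) ∧
      (∀ i ∈ L \ (L ∩ R), ∀ j ∈ R \ (L ∩ R), ¬ ∃ k, IsLUB {i, j} k) ∧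
      (∀ i ∈ L, ∀ j ∈ R, i ⊓ j ∈ L ∩ R) := by
  by_cases hdir : ∀ i j : I, UpperBounded i j
  · have hlub (i j : I) : ∃ k, IsLUB {i, j} k := h.join_exists i j (hdir i j)
    refine ⟨univ, univ, fun _ _ _ _ => trivial, fun _ _ _ _ => trivial,
      fun i _ j _ => (hlub i j).imp fun _ hk => ⟨hk, trivial⟩,
      fun i _ j _ => (hlub i j).imp fun _ hk => ⟨hk, trivial⟩, union_self _,
      (inter_self _).trans (eq_univ_of_forall hlub).symm, by simp, by simp,
      fun _ _ _ _ => ⟨trivial, trivial⟩⟩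
  simp only [not_forall] at hdir
  obtain ⟨a, b, hab⟩ := hdir
  have hba : ¬UpperBounded b a := fun h' => hab h'.symm
  refine ⟨{i | UpperBounded i a}, {i | UpperBounded i b},
    fun i hi j hj => UpperBounded.mono_left hi hj, fun i hi j hj => UpperBounded.mono_left hi hj,
    fun i hi j hj => h.exists_isLUB_upperBounded hab hi hj,
    fun i hi j hj => h.exists_isLUB_upperBounded hba hi hj,
    eq_univ_of_forall (upperBounded_or_upperBounded h.two_of_three hab),
    h.inter_eq_setOf_forall_exists_isLUB hab, ?_, ?_,
    fun i hi j hj => ⟨hi.mono_left inf_le_left, hj.mono_left inf_le_right⟩⟩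
  all_goals rw [sdiff_self_inter, sdiff_inter_self_eq_sdiff]
  · exact iff_of_true ⟨a, upperBounded_refl a, hab⟩ ⟨b, upperBounded_refl b, hba⟩
  · exact fun i hi j hj ⟨k, hk⟩ =>
      not_upperBounded_of_not_upperBounded h.two_of_three hab hi.2 hj.2 hk.upperBounded
end

section
/- In a distributive almost-lattice I, an element i belongs to the kernel ker(I) = L ∩ R if and only if i ∨ j exists for every j ∈ I. -/
section Kernel

variable {I : Type*} [Preorder I] {L R : Set I}

theorem exists_isLUB_of_mem_inter
    (hLjoin : ∀ i ∈ L, ∀ j ∈ L, ∃ k, IsLUB {i, j} k ∧ k ∈ L)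
    (hRjoin : ∀ i ∈ R, ∀ j ∈ R, ∃ k, IsLUB {i, j} k ∧ k ∈ R)
    (hunion : L ∪ R = Set.univ) {i : I} (hi : i ∈ L ∩ R) (j : I) :
    ∃ k, IsLUB {i, j} k := by
  rcases (hunion ▸ Set.mem_univ j : j ∈ L ∪ R) with hj | hj
  · exact (hLjoin i hi.1 j hj).imp fun _ => And.left
  · exact (hRjoin i hi.2 j hj).imp fun _ => And.left

theorem mem_inter_of_forall_exists_isLUB
    (hunion : L ∪ R = Set.univ)
    (hbal : (L \ (L ∩ R)).Nonempty ↔ (R \ (L ∩ R)).Nonempty)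
    (hcross : ∀ i ∈ L \ (L ∩ R), ∀ j ∈ R \ (L ∩ R), ¬ ∃ k, IsLUB {i, j} k)
    {i : I} (hall : ∀ j, ∃ k, IsLUB {i, j} k) : i ∈ L ∩ R := by
  by_contra hker
  -- balance yields a non-kernel element on the other side, and `i` has no join with it
  rcases (hunion ▸ Set.mem_univ i : i ∈ L ∪ R) with hi | hi
  · obtain ⟨j, hj⟩ := hbal.mp ⟨i, hi, hker⟩
    exact hcross i ⟨hi, hker⟩ j hj (hall j)
  · obtain ⟨j, hj⟩ := hbal.mpr ⟨i, hi, hker⟩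
    exact hcross j hj i ⟨hi, hker⟩ (Set.pair_comm i j ▸ hall j)

end Kernel

theorem stmt2_general {I : Type*} [SemilatticeInf I]
    (L R : Set I)
    (hLjoin : ∀ i ∈ L, ∀ j ∈ L, ∃ k, IsLUB {i, j} k ∧ k ∈ L)
    (hRjoin : ∀ i ∈ R, ∀ j ∈ R, ∃ k, IsLUB {i, j} k ∧ k ∈ R)
    (hunion : L ∪ R = Set.univ)
    (hbal : (L \ (L ∩ R)).Nonempty ↔ (R \ (L ∩ R)).Nonempty)
    (hcross : ∀ i ∈ L \ (L ∩ R), ∀ j ∈ R \ (L ∩ R), ¬ ∃ k, IsLUB {i, j} k)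
    (i : I) :
    i ∈ L ∩ R ↔ ∀ j : I, ∃ k, IsLUB {i, j} k :=
  ⟨exists_isLUB_of_mem_inter hLjoin hRjoin hunion,
    mem_inter_of_forall_exists_isLUB hunion hbal hcross⟩

/-- In a distributive almost-lattice with left/right decomposition `L`, `R` (downward
closed, join-closed, covering `I`, balanced, with no joins across the parts), an element
`i` belongs to the kernel `L ∩ R` if and only if `i ∨ j` exists for every `j`. -/
theorem stmt2 {I : Type*} [SemilatticeInf I] (h : DistribAlmostLattice I)
    (L R : Set I)
    (hLdc : ∀ i ∈ L, ∀ j, j ≤ i → j ∈ L)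
    (hRdc : ∀ i ∈ R, ∀ j, j ≤ i → j ∈ R)
    (hLjoin : ∀ i ∈ L, ∀ j ∈ L, ∃ k, IsLUB {i, j} k ∧ k ∈ L)
    (hRjoin : ∀ i ∈ R, ∀ j ∈ R, ∃ k, IsLUB {i, j} k ∧ k ∈ R)
    (hunion : L ∪ R = Set.univ)
    (hbal : (L \ (L ∩ R)).Nonempty ↔ (R \ (L ∩ R)).Nonempty)
    (hcross : ∀ i ∈ L \ (L ∩ R), ∀ j ∈ R \ (L ∩ R), ¬ ∃ k, IsLUB {i, j} k)
    (i : I) :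
    i ∈ L ∩ R ↔ ∀ j : I, ∃ k, IsLUB {i, j} k :=
  stmt2_general L R hLjoin hRjoin hunion hbal hcross i
end

section
/- Let A be a Boolean algebra carrying a finitely additive strictly positive measure μ : A → [0,1] (μ(0) = 0, μ(1) = 1, μ(a + b) = μ(a) + μ(b) for disjoint a, b, and μ(a) > 0 for a ≠ 0). If b is an element of a Boolean algebra extending A, then μ extends to a finitely additive strictly positive measure μ' on the subalgebra generated by A ∪ {b}, defined via μ'(a·εb) = ½(μ(a) + μ̃(a·εb) − μ̃(a·(−εb))) where μ̃(a·εb) = sup{μ(a') : a' ∈ A, a' ≤ a·εb}, for ε = ±1. -/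
/-- `sSupBelow A μ x` is `μ̃(x) = sup {μ(a') : a' ∈ A, a' ≤ x}`. -/
noncomputable def sSupBelow {B : Type*} [BooleanAlgebra B] (A : Set B) (μ : B → ℝ)
    (x : B) : ℝ :=
  sSup (μ '' {a' | a' ∈ A ∧ a' ≤ x})

/-- The subalgebra generated by `A ∪ {b}`: elements of the form `a₀ + a₁·b + a₂·(−b)`. -/
def genSet {B : Type*} [BooleanAlgebra B] (A : Set B) (b : B) : Set B :=
  {x | ∃ a₀ ∈ A, ∃ a₁ ∈ A, ∃ a₂ ∈ A, x = a₀ ⊔ (a₁ ⊓ b) ⊔ (a₂ ⊓ bᶜ)}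

/-!
The extension is the mean `μ' x = (μ̃ x + (1 - μ̃ xᶜ)) / 2` of the inner measure
`μ̃ = sSupBelow A μ` and the outer measure `1 - μ̃ xᶜ`. Since `A` is closed under `⊓`, every
`a ∈ A` splits the inner measure, `μ̃ x = μ̃ (a ⊓ x) + μ̃ (aᶜ ⊓ x)`, hence also the outer measure
and `μ'`. An element of the generated algebra is `p ⊓ b ⊔ q ⊓ bᶜ` with `p, q ∈ A`; splitting
along `p` and `q` reduces additivity to `μ' (a ⊓ b) + μ' (a ⊓ bᶜ) = μ a`, which is built into
the formula. Positivity follows from `μ̃ ≤ μ'` (superadditivity of `μ̃` on `x, xᶜ`) and density.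
-/
section

variable {B : Type*} [BooleanAlgebra B]

open BooleanSubalgebra

structure IsFinitelyAdditiveProb (A : BooleanSubalgebra B) (μ : B → ℝ) : Prop where
  nonneg : ∀ a ∈ A, 0 ≤ μ a
  map_sup : ∀ a ∈ A, ∀ c ∈ A, Disjoint a c → μ (a ⊔ c) = μ a + μ c
  map_top : μ ⊤ = 1

namespace IsFinitelyAdditiveProb

variable {A : BooleanSubalgebra B} {μ : B → ℝ} {a c : B}

theorem inf_add_compl_inf (hμ : IsFinitelyAdditiveProb A μ) (ha : a ∈ A) (hc : c ∈ A) :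
    μ (a ⊓ c) + μ (aᶜ ⊓ c) = μ c := by
  rw [← hμ.map_sup _ (inf_mem ha hc) _ (inf_mem (compl_mem ha) hc)
    (disjoint_compl_right.mono inf_le_left inf_le_left), ← inf_sup_right, sup_compl_eq_top,
    top_inf_eq]

theorem mono (hμ : IsFinitelyAdditiveProb A μ) (ha : a ∈ A) (hc : c ∈ A) (hca : c ≤ a) :
    μ c ≤ μ a := by
  have h := hμ.inf_add_compl_inf hc ha
  rw [inf_eq_left.mpr hca] at h
  linarith [hμ.nonneg _ (inf_mem (compl_mem hc) ha)]

theorem le_one (hμ : IsFinitelyAdditiveProb A μ) (ha : a ∈ A) : μ a ≤ 1 :=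
  hμ.map_top ▸ hμ.mono top_mem ha le_top

theorem map_compl (hμ : IsFinitelyAdditiveProb A μ) (ha : a ∈ A) : μ aᶜ = 1 - μ a := by
  have h := hμ.map_sup _ ha _ (compl_mem ha) disjoint_compl_right
  rw [sup_compl_eq_top, hμ.map_top] at h
  linarith

end IsFinitelyAdditiveProb

variable {A : BooleanSubalgebra B} {μ : B → ℝ} {a x : B}

theorem sSupBelow_le {r : ℝ} (h : ∀ a ∈ A, a ≤ x → μ a ≤ r) : sSupBelow A μ x ≤ r :=
  csSup_le ⟨μ ⊥, ⊥, ⟨bot_mem, bot_le⟩, rfl⟩ (by rintro _ ⟨a, ⟨ha, hax⟩, rfl⟩; exact h a ha hax)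

namespace IsFinitelyAdditiveProb

theorem le_sSupBelow (hμ : IsFinitelyAdditiveProb A μ) (ha : a ∈ A) (hax : a ≤ x) :
    μ a ≤ sSupBelow A μ x :=
  le_csSup ⟨1, by rintro _ ⟨c, ⟨hc, -⟩, rfl⟩; exact hμ.le_one hc⟩ ⟨a, ⟨ha, hax⟩, rfl⟩

theorem sSupBelow_of_mem (hμ : IsFinitelyAdditiveProb A μ) (ha : a ∈ A) :
    sSupBelow A μ a = μ a :=
  le_antisymm (sSupBelow_le fun _ hc hca ↦ hμ.mono ha hc hca) (hμ.le_sSupBelow ha le_rfl)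

theorem sSupBelow_le_one (hμ : IsFinitelyAdditiveProb A μ) (x : B) : sSupBelow A μ x ≤ 1 :=
  sSupBelow_le fun _ ha _ ↦ hμ.le_one ha

theorem add_le_sSupBelow_sup (hμ : IsFinitelyAdditiveProb A μ) {u v : B} (huv : Disjoint u v) :
    sSupBelow A μ u + sSupBelow A μ v ≤ sSupBelow A μ (u ⊔ v) := by
  suffices sSupBelow A μ u ≤ sSupBelow A μ (u ⊔ v) - sSupBelow A μ v by linarith
  refine sSupBelow_le fun c hc hcu ↦ ?_
  suffices sSupBelow A μ v ≤ sSupBelow A μ (u ⊔ v) - μ c by linarith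
  refine sSupBelow_le fun d hd hdv ↦ ?_
  have hcd := hμ.map_sup _ hc _ hd (huv.mono hcu hdv)
  have := hμ.le_sSupBelow (sup_mem hc hd) (sup_le_sup hcu hdv)
  linarith

theorem sSupBelow_inf_add_compl_inf (hμ : IsFinitelyAdditiveProb A μ) (ha : a ∈ A) (x : B) :
    sSupBelow A μ (a ⊓ x) + sSupBelow A μ (aᶜ ⊓ x) = sSupBelow A μ x := by
  refine le_antisymm ?_ (sSupBelow_le fun c hc hcx ↦ ?_)
  · have h := hμ.add_le_sSupBelow_sup
      ((disjoint_compl_right (a := a)).mono (inf_le_left (b := x)) (inf_le_left (b := x)))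
    rwa [← inf_sup_right, sup_compl_eq_top, top_inf_eq] at h
  · rw [← hμ.inf_add_compl_inf ha hc]
    exact add_le_add (hμ.le_sSupBelow (inf_mem ha hc) (inf_le_inf_left a hcx))
      (hμ.le_sSupBelow (inf_mem (compl_mem ha) hc) (inf_le_inf_left aᶜ hcx))

theorem sSupBelow_compl_inf (hμ : IsFinitelyAdditiveProb A μ) (ha : a ∈ A) (x : B) :
    sSupBelow A μ (a ⊓ x)ᶜ = μ aᶜ + sSupBelow A μ (a ⊓ xᶜ) := by
  rw [← hμ.sSupBelow_inf_add_compl_inf ha, inf_eq_left.mpr (compl_le_compl inf_le_left),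
    hμ.sSupBelow_of_mem (compl_mem ha), compl_inf, inf_sup_left, inf_compl_self, bot_sup_eq,
    add_comm]

theorem sSupBelow_pos (hμ : IsFinitelyAdditiveProb A μ)
    (hdense : ∀ c : B, c ≠ ⊥ → ∃ a ∈ A, a ≠ ⊥ ∧ a ≤ c) (hpos : ∀ a ∈ A, a ≠ ⊥ → 0 < μ a)
    (hx : x ≠ ⊥) : 0 < sSupBelow A μ x := by
  obtain ⟨a, ha, ha_ne, hax⟩ := hdense x hx
  exact (hpos a ha ha_ne).trans_le (hμ.le_sSupBelow ha hax)

end IsFinitelyAdditiveProb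

theorem inf_sup_inf_compl_eq_sup_sup (p q c : B) :
    p ⊓ c ⊔ q ⊓ cᶜ = p ⊓ q ⊔ (p ⊓ qᶜ) ⊓ c ⊔ (q ⊓ pᶜ) ⊓ cᶜ :=
  calc p ⊓ c ⊔ q ⊓ cᶜ = (p ⊓ q ⊔ p ⊓ qᶜ) ⊓ c ⊔ (q ⊓ p ⊔ q ⊓ pᶜ) ⊓ cᶜ := by
        rw [sup_inf_inf_compl, sup_inf_inf_compl]
    _ = (p ⊓ q) ⊓ c ⊔ (p ⊓ q) ⊓ cᶜ ⊔ (p ⊓ qᶜ) ⊓ c ⊔ (q ⊓ pᶜ) ⊓ cᶜ := by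
        rw [inf_sup_right, inf_sup_right, inf_comm q p]; ac_rfl
    _ = _ := by rw [sup_inf_inf_compl]

noncomputable def innerOuterMean (A : Set B) (μ : B → ℝ) (x : B) : ℝ :=
  (sSupBelow A μ x + (1 - sSupBelow A μ xᶜ)) / 2

theorem exists_eq_inf_sup_inf_compl_of_mem_genSet {b x : B} (hx : x ∈ genSet A b) :
    ∃ p ∈ A, ∃ q ∈ A, x = p ⊓ b ⊔ q ⊓ bᶜ := by
  obtain ⟨a₀, h₀, a₁, h₁, a₂, h₂, rfl⟩ := hx
  refine ⟨a₀ ⊔ a₁, sup_mem h₀ h₁, a₀ ⊔ a₂, sup_mem h₀ h₂, ?_⟩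
  rw [inf_sup_right, inf_sup_right, sup_sup_sup_comm, sup_inf_inf_compl, sup_assoc]

namespace IsFinitelyAdditiveProb

theorem innerOuterMean_inf (hμ : IsFinitelyAdditiveProb A μ) (ha : a ∈ A) (x : B) :
    innerOuterMean A μ (a ⊓ x) =
      (μ a + sSupBelow A μ (a ⊓ x) - sSupBelow A μ (a ⊓ xᶜ)) / 2 := by
  rw [innerOuterMean, hμ.sSupBelow_compl_inf ha, hμ.map_compl ha]
  ring

theorem innerOuterMean_inf_add_inf_compl (hμ : IsFinitelyAdditiveProb A μ) (ha : a ∈ A)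
    (x : B) : innerOuterMean A μ (a ⊓ x) + innerOuterMean A μ (a ⊓ xᶜ) = μ a := by
  rw [hμ.innerOuterMean_inf ha, hμ.innerOuterMean_inf ha, compl_compl]
  ring

theorem innerOuterMean_of_mem (hμ : IsFinitelyAdditiveProb A μ) (ha : a ∈ A) :
    innerOuterMean A μ a = μ a := by
  rw [innerOuterMean, hμ.sSupBelow_of_mem ha, hμ.sSupBelow_of_mem (compl_mem ha),
    hμ.map_compl ha]
  ring

theorem innerOuterMean_inf_add_compl_inf (hμ : IsFinitelyAdditiveProb A μ) (ha : a ∈ A)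
    (x : B) :
    innerOuterMean A μ (a ⊓ x) + innerOuterMean A μ (aᶜ ⊓ x) = innerOuterMean A μ x := by
  rw [hμ.innerOuterMean_inf ha, hμ.innerOuterMean_inf (compl_mem ha), hμ.map_compl ha,
    innerOuterMean, ← hμ.sSupBelow_inf_add_compl_inf ha x,
    ← hμ.sSupBelow_inf_add_compl_inf ha xᶜ]
  ring

theorem innerOuterMean_sup_of_le_of_disjoint (hμ : IsFinitelyAdditiveProb A μ) (ha : a ∈ A)
    {x y : B} (hx : x ≤ a) (hy : Disjoint a y) :
    innerOuterMean A μ (x ⊔ y) = innerOuterMean A μ x + innerOuterMean A μ y := by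
  rw [← hμ.innerOuterMean_inf_add_compl_inf ha, inf_sup_left, inf_sup_left, inf_eq_right.mpr hx,
    hy.eq_bot, sup_bot_eq, (disjoint_compl_left.mono_right hx).eq_bot, bot_sup_eq,
    inf_eq_right.mpr (le_compl_iff_disjoint_left.mpr hy)]

theorem innerOuterMean_sup_sup_inf_compl (hμ : IsFinitelyAdditiveProb A μ) {a₀ a₁ a₂ : B}
    (h₀ : a₀ ∈ A) (h₁ : a₁ ∈ A) (h₀₁ : Disjoint a₀ a₁) (h₀₂ : Disjoint a₀ a₂)
    (h₁₂ : Disjoint a₁ a₂) (c : B) :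
    innerOuterMean A μ (a₀ ⊔ a₁ ⊓ c ⊔ a₂ ⊓ cᶜ) =
      μ a₀ + innerOuterMean A μ (a₁ ⊓ c) + innerOuterMean A μ (a₂ ⊓ cᶜ) := by
  rw [sup_assoc, hμ.innerOuterMean_sup_of_le_of_disjoint h₀ le_rfl
      (disjoint_sup_right.mpr ⟨h₀₁.mono_right inf_le_left, h₀₂.mono_right inf_le_left⟩),
    hμ.innerOuterMean_sup_of_le_of_disjoint h₁ inf_le_left (h₁₂.mono_right inf_le_left),
    hμ.innerOuterMean_of_mem h₀, add_assoc]

theorem innerOuterMean_inf_sup_inf_compl (hμ : IsFinitelyAdditiveProb A μ) {p q : B}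
    (hp : p ∈ A) (hq : q ∈ A) (c : B) :
    innerOuterMean A μ (p ⊓ c ⊔ q ⊓ cᶜ) =
      innerOuterMean A μ (p ⊓ c) + innerOuterMean A μ (q ⊓ cᶜ) := by
  have hpc : innerOuterMean A μ (p ⊓ q ⊓ c) + innerOuterMean A μ (p ⊓ qᶜ ⊓ c) =
      innerOuterMean A μ (p ⊓ c) := by
    convert hμ.innerOuterMean_inf_add_compl_inf hq (p ⊓ c) using 3 <;> ac_rfl
  have hqc : innerOuterMean A μ (p ⊓ q ⊓ cᶜ) + innerOuterMean A μ (q ⊓ pᶜ ⊓ cᶜ) =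
      innerOuterMean A μ (q ⊓ cᶜ) := by
    convert hμ.innerOuterMean_inf_add_compl_inf hp (q ⊓ cᶜ) using 3 <;> ac_rfl
  have hpq := hμ.innerOuterMean_inf_add_inf_compl (inf_mem hp hq) c
  rw [inf_sup_inf_compl_eq_sup_sup, hμ.innerOuterMean_sup_sup_inf_compl (inf_mem hp hq)
    (inf_mem hp (compl_mem hq)) (disjoint_compl_right.mono inf_le_right inf_le_right)
    (disjoint_compl_right.mono inf_le_left inf_le_right)
    (disjoint_compl_right.mono inf_le_left inf_le_right)]
  linarith

theorem innerOuterMean_sup_inf_of_disjoint (hμ : IsFinitelyAdditiveProb A μ) {p r c : B}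
    (hp : p ∈ A) (h : Disjoint (p ⊓ c) (r ⊓ c)) :
    innerOuterMean A μ ((p ⊔ r) ⊓ c) =
      innerOuterMean A μ (p ⊓ c) + innerOuterMean A μ (r ⊓ c) := by
  rw [inf_sup_right]
  exact hμ.innerOuterMean_sup_of_le_of_disjoint hp inf_le_left
    ((disjoint_assoc.mp h).mono_right (le_inf inf_le_right le_rfl))

theorem innerOuterMean_sup_of_mem_genSet (hμ : IsFinitelyAdditiveProb A μ) {b x y : B}
    (hx : x ∈ genSet A b) (hy : y ∈ genSet A b) (hxy : Disjoint x y) :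
    innerOuterMean A μ (x ⊔ y) = innerOuterMean A μ x + innerOuterMean A μ y := by
  obtain ⟨p, hp, q, hq, rfl⟩ := exists_eq_inf_sup_inf_compl_of_mem_genSet hx
  obtain ⟨r, hr, s, hs, rfl⟩ := exists_eq_inf_sup_inf_compl_of_mem_genSet hy
  have hb := hμ.innerOuterMean_sup_inf_of_disjoint hp (hxy.mono le_sup_left le_sup_left)
  have hbc := hμ.innerOuterMean_sup_inf_of_disjoint hq (hxy.mono le_sup_right le_sup_right)
  rw [show p ⊓ b ⊔ q ⊓ bᶜ ⊔ (r ⊓ b ⊔ s ⊓ bᶜ) = (p ⊔ r) ⊓ b ⊔ (q ⊔ s) ⊓ bᶜ by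
      rw [inf_sup_right, inf_sup_right]; ac_rfl,
    hμ.innerOuterMean_inf_sup_inf_compl (sup_mem hp hr) (sup_mem hq hs),
    hμ.innerOuterMean_inf_sup_inf_compl hp hq, hμ.innerOuterMean_inf_sup_inf_compl hr hs, hb, hbc]
  ring

theorem sSupBelow_le_innerOuterMean (hμ : IsFinitelyAdditiveProb A μ) (x : B) :
    sSupBelow A μ x ≤ innerOuterMean A μ x := by
  have h := hμ.add_le_sSupBelow_sup (disjoint_compl_right (a := x))
  rw [sup_compl_eq_top] at h
  have := hμ.sSupBelow_le_one ⊤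
  rw [innerOuterMean]
  linarith

end IsFinitelyAdditiveProb

end

theorem stmt3_general {B : Type*} [BooleanAlgebra B] (A : Set B) (μ : B → ℝ) (b : B)
    (hbotA : ⊥ ∈ A)
    (hsupA : ∀ x ∈ A, ∀ y ∈ A, x ⊔ y ∈ A)
    (hinfA : ∀ x ∈ A, ∀ y ∈ A, x ⊓ y ∈ A)
    (hcomplA : ∀ x ∈ A, xᶜ ∈ A)
    (hdense : ∀ c : B, c ≠ ⊥ → ∃ a ∈ A, a ≠ ⊥ ∧ a ≤ c)
    (hμtop : μ ⊤ = 1)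
    (hrange : ∀ x ∈ A, 0 ≤ μ x ∧ μ x ≤ 1)
    (hadd : ∀ x ∈ A, ∀ y ∈ A, x ⊓ y = ⊥ → μ (x ⊔ y) = μ x + μ y)
    (hpos : ∀ x ∈ A, x ≠ ⊥ → 0 < μ x) :
    ∃ μ' : B → ℝ,
      (∀ x ∈ A, μ' x = μ x) ∧
      (∀ x ∈ genSet A b, ∀ y ∈ genSet A b, x ⊓ y = ⊥ → μ' (x ⊔ y) = μ' x + μ' y) ∧
      (∀ x ∈ genSet A b, x ≠ ⊥ → 0 < μ' x) ∧
      (∀ a ∈ A, μ' (a ⊓ b) =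
        (μ a + sSupBelow A μ (a ⊓ b) - sSupBelow A μ (a ⊓ bᶜ)) / 2) ∧
      (∀ a ∈ A, μ' (a ⊓ bᶜ) =
        (μ a + sSupBelow A μ (a ⊓ bᶜ) - sSupBelow A μ (a ⊓ b)) / 2) ∧
      (∀ a₀ ∈ A, ∀ a₁ ∈ A, ∀ a₂ ∈ A,
        a₀ ⊓ a₁ = ⊥ → a₀ ⊓ a₂ = ⊥ → a₁ ⊓ a₂ = ⊥ →
        μ' (a₀ ⊔ (a₁ ⊓ b) ⊔ (a₂ ⊓ bᶜ)) = μ a₀ + μ' (a₁ ⊓ b) + μ' (a₂ ⊓ bᶜ)) := by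
  let A' : BooleanSubalgebra B :=
    { carrier := A
      supClosed' := fun x hx y hy ↦ hsupA x hx y hy
      infClosed' := fun x hx y hy ↦ hinfA x hx y hy
      compl_mem' := fun {x} hx ↦ hcomplA x hx
      bot_mem' := hbotA }
  have hμ : IsFinitelyAdditiveProb A' μ :=
    ⟨fun a ha ↦ (hrange a ha).1, fun a ha c hc hac ↦ hadd a ha c hc hac.eq_bot, hμtop⟩
  refine ⟨innerOuterMean A μ, fun a ha ↦ hμ.innerOuterMean_of_mem ha,
    fun x hx y hy hxy ↦ hμ.innerOuterMean_sup_of_mem_genSet hx hy (disjoint_iff.mpr hxy),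
    fun x _ hx ↦ (hμ.sSupBelow_pos hdense hpos hx).trans_le (hμ.sSupBelow_le_innerOuterMean x),
    fun a ha ↦ hμ.innerOuterMean_inf ha b, fun a ha ↦ ?_,
    fun a₀ h₀ a₁ h₁ a₂ _ h₀₁ h₀₂ h₁₂ ↦ hμ.innerOuterMean_sup_sup_inf_compl h₀ h₁
      (disjoint_iff.mpr h₀₁) (disjoint_iff.mpr h₀₂) (disjoint_iff.mpr h₁₂) b⟩
  have h := hμ.innerOuterMean_inf ha bᶜ
  rw [compl_compl] at h
  exact h

/-- Measure extension by one element: a finitely additive strictly positive measure `μ`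
on a (dense) subalgebra `A` of `B` extends to a finitely additive strictly positive
measure `μ'` on the subalgebra generated by `A ∪ {b}`, given by the formula
`μ'(a·εb) = ½(μ(a) + μ̃(a·εb) − μ̃(a·(−εb)))`. -/
theorem stmt3 {B : Type*} [BooleanAlgebra B] (A : Set B) (μ : B → ℝ) (b : B)
    (hbotA : ⊥ ∈ A) (htopA : ⊤ ∈ A)
    (hsupA : ∀ x ∈ A, ∀ y ∈ A, x ⊔ y ∈ A)
    (hinfA : ∀ x ∈ A, ∀ y ∈ A, x ⊓ y ∈ A)
    (hcomplA : ∀ x ∈ A, xᶜ ∈ A)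
    (hdense : ∀ c : B, c ≠ ⊥ → ∃ a ∈ A, a ≠ ⊥ ∧ a ≤ c)
    (hμbot : μ ⊥ = 0) (hμtop : μ ⊤ = 1)
    (hrange : ∀ x ∈ A, 0 ≤ μ x ∧ μ x ≤ 1)
    (hadd : ∀ x ∈ A, ∀ y ∈ A, x ⊓ y = ⊥ → μ (x ⊔ y) = μ x + μ y)
    (hpos : ∀ x ∈ A, x ≠ ⊥ → 0 < μ x) :
    ∃ μ' : B → ℝ,
      (∀ x ∈ A, μ' x = μ x) ∧
      (∀ x ∈ genSet A b, ∀ y ∈ genSet A b, x ⊓ y = ⊥ → μ' (x ⊔ y) = μ' x + μ' y) ∧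
      (∀ x ∈ genSet A b, x ≠ ⊥ → 0 < μ' x) ∧
      (∀ a ∈ A, μ' (a ⊓ b) =
        (μ a + sSupBelow A μ (a ⊓ b) - sSupBelow A μ (a ⊓ bᶜ)) / 2) ∧
      (∀ a ∈ A, μ' (a ⊓ bᶜ) =
        (μ a + sSupBelow A μ (a ⊓ bᶜ) - sSupBelow A μ (a ⊓ b)) / 2) ∧
      (∀ a₀ ∈ A, ∀ a₁ ∈ A, ∀ a₂ ∈ A,
        a₀ ⊓ a₁ = ⊥ → a₀ ⊓ a₂ = ⊥ → a₁ ⊓ a₂ = ⊥ →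
        μ' (a₀ ⊔ (a₁ ⊓ b) ⊔ (a₂ ⊓ bᶜ)) = μ a₀ + μ' (a₁ ⊓ b) + μ' (a₂ ⊓ bᶜ)) :=
  stmt3_general A μ b hbotA hsupA hinfA hcomplA hdense hμtop hrange hadd hpos
end

section
/- Let A be a Boolean algebra generated by a dense subset D with 1 ∈ D, such that: D is closed under nonzero products; for a, b ∈ D the difference a − b is a finite disjoint sum of elements of D; and μ : D → (0,1] is finitely additive (if a = Σ_{i<n} aᵢ with aᵢ ∈ D pairwise disjoint and a ∈ D, then μ(a) = Σ_{i<n} μ(aᵢ)) with μ(1) = 1. Then A equals the closure of D ∪ {0} under finite disjoint sums, and there is a unique finitely additive strictly positive measure μ̄ on A extending μ, given by μ̄(a) = sup{Σ_{i<n} μ(aᵢ) : {aᵢ : i < n} ⊆ D is an antichain below a}. -/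
/-- The Boolean subalgebra generated by a subset `D`: the closure of `D` under
joins, meets and complements. -/
inductive BoolGen {B : Type*} [BooleanAlgebra B] (D : Set B) : B → Prop
  | base {a : B} : a ∈ D → BoolGen D a
  | sup {a b : B} : BoolGen D a → BoolGen D b → BoolGen D (a ⊔ b)
  | inf {a b : B} : BoolGen D a → BoolGen D b → BoolGen D (a ⊓ b)
  | compl {a : B} : BoolGen D a → BoolGen D aᶜ

/-- Measures on suitable dense subsets extend uniquely to the generated Boolean algebra:
if `D` is dense, generates `A`, contains `1`, is closed under nonzero products, differences
of elements of `D` are finite disjoint sums from `D`, and `μ : D → (0,1]` is finitely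
additive with `μ(1) = 1`, then every element of `A` is a finite disjoint sum from
`D ∪ {0}`, and there is a unique finitely additive strictly positive measure `μ̄` on `A`
extending `μ`, given by `μ̄(a) = sup {Σ μ(aᵢ) : {aᵢ} ⊆ D an antichain below a}`. -/
theorem stmt6 {A : Type*} [BooleanAlgebra A] (D : Set A) (μ : A → ℝ)
    (hbotD : ⊥ ∉ D) (htopD : ⊤ ∈ D)
    (hdense : ∀ a : A, a ≠ ⊥ → ∃ d ∈ D, d ≤ a)
    (hgen : ∀ a : A, BoolGen D a)
    (hprod : ∀ a ∈ D, ∀ b ∈ D, a ⊓ b ≠ ⊥ → a ⊓ b ∈ D)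
    (hdiff : ∀ a ∈ D, ∀ b ∈ D, ∃ s : Finset A, ↑s ⊆ D ∧
      (↑s : Set A).Pairwise (fun x y => x ⊓ y = ⊥) ∧ a \ b = s.sup id)
    (hμtop : μ ⊤ = 1)
    (hrange : ∀ d ∈ D, 0 < μ d ∧ μ d ≤ 1)
    (hadd : ∀ s : Finset A, ↑s ⊆ D → (↑s : Set A).Pairwise (fun x y => x ⊓ y = ⊥) →
      s.sup id ∈ D → μ (s.sup id) = ∑ x ∈ s, μ x) :
    (∀ a : A, ∃ s : Finset A, ↑s ⊆ D ∪ {⊥} ∧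
      (↑s : Set A).Pairwise (fun x y => x ⊓ y = ⊥) ∧ a = s.sup id) ∧
    ∃ μbar : A → ℝ,
      (∀ d ∈ D, μbar d = μ d) ∧
      μbar ⊥ = 0 ∧
      (∀ a b : A, a ⊓ b = ⊥ → μbar (a ⊔ b) = μbar a + μbar b) ∧
      (∀ a : A, a ≠ ⊥ → 0 < μbar a) ∧
      (∀ a : A, a ≠ ⊥ → μbar a = sSup {x : ℝ | ∃ s : Finset A, ↑s ⊆ D ∧
        (∀ y ∈ s, y ≤ a) ∧ (↑s : Set A).Pairwise (fun x' y => x' ⊓ y = ⊥) ∧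
        x = ∑ y ∈ s, μ y}) ∧
      (∀ ν : A → ℝ, (∀ d ∈ D, ν d = μ d) →
        (∀ a b : A, a ⊓ b = ⊥ → ν (a ⊔ b) = ν a + ν b) →
        (∀ a : A, a ≠ ⊥ → 0 < ν a) → ν = μbar) := by
  classical
  set μ0 : A → ℝ := fun a => if a = ⊥ then 0 else μ a with hμ0
  have hμ0bot : μ0 ⊥ = 0 := if_pos rfl
  have hμ0D : ∀ d ∈ D, μ0 d = μ d := by
    intro d hd
    simp only [hμ0]
    rw [if_neg]
    rintro rfl; exact hbotD hd
  -- L1 : refinement lemma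
  have L1 : ∀ s : Finset A, ↑s ⊆ D → (↑s : Set A).Pairwise (fun x y => x ⊓ y = ⊥) →
      ∀ d ∈ D, d ≤ s.sup id → μ d = ∑ x ∈ s, μ0 (d ⊓ x) := by
    intro s hsD hsP d hd hle
    set t := s.filter (fun x => d ⊓ x ≠ ⊥) with ht
    have htsub : t ⊆ s := Finset.filter_subset _ _
    set u := t.image (fun x => d ⊓ x) with hu
    have huD : ↑u ⊆ D := by
      intro z hz
      simp only [hu, Finset.coe_image, Set.mem_image, Finset.mem_coe, ht,
        Finset.mem_filter] at hz
      obtain ⟨x, ⟨hxs, hxne⟩, rfl⟩ := hz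
      exact hprod d hd x (hsD hxs) hxne
    have huP : (↑u : Set A).Pairwise (fun x y => x ⊓ y = ⊥) := by
      intro z hz w hw hzw
      simp only [hu, Finset.coe_image, Set.mem_image, Finset.mem_coe] at hz hw
      obtain ⟨x, hx, rfl⟩ := hz
      obtain ⟨y, hy, rfl⟩ := hw
      have hxy : x ≠ y := by rintro rfl; exact hzw rfl
      have hd0 : x ⊓ y = ⊥ := hsP (htsub hx) (htsub hy) hxy
      have : (d ⊓ x) ⊓ (d ⊓ y) ≤ x ⊓ y := inf_le_inf inf_le_right inf_le_right
      rw [hd0] at this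
      exact le_bot_iff.mp this
    have husup : u.sup id = d := by
      have h1 : u.sup id = t.sup (fun x => d ⊓ x) := by
        rw [hu, Finset.sup_image]; rfl
      have h2 : t.sup (fun x => d ⊓ x) = s.sup (fun x => d ⊓ x) := by
        apply le_antisymm (Finset.sup_le fun x hx => Finset.le_sup (htsub hx))
        apply Finset.sup_le
        intro x hx
        by_cases hne : d ⊓ x = ⊥
        · rw [hne]; exact bot_le
        · exact Finset.le_sup (by rw [ht, Finset.mem_filter]; exact ⟨hx, hne⟩)
      have h3 : s.sup (fun x => d ⊓ x) = d ⊓ s.sup id :=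
        (Finset.sup_inf_distrib_left s id d).symm
      rw [h1, h2, h3, inf_eq_left.mpr hle]
    have hdd : u.sup id ∈ D := by rw [husup]; exact hd
    have hsum := hadd u huD huP hdd
    rw [husup] at hsum
    rw [hsum, hu]
    rw [Finset.sum_image ?inj]
    case inj =>
      intro x hx y hy hxy
      by_contra hne
      have hd0 : x ⊓ y = ⊥ := hsP (htsub hx) (htsub hy) hne
      have h1 : d ⊓ x ≤ x ⊓ y := le_inf inf_le_right ((show d ⊓ x = d ⊓ y from hxy) ▸ inf_le_right)
      rw [hd0, le_bot_iff] at h1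
      exact (Finset.mem_filter.mp hx).2 h1
    have : ∀ x ∈ t, μ (d ⊓ x) = μ0 (d ⊓ x) := by
      intro x hx
      rw [hμ0]
      simp only []
      rw [if_neg (Finset.mem_filter.mp hx).2]
    rw [Finset.sum_congr rfl this, ht]
    exact Finset.sum_filter_of_ne (by
      intro x _ hx h0
      rw [h0, hμ0bot] at hx
      exact hx rfl)
  -- L2 : well-definedness
  have L2 : ∀ s t : Finset A, ↑s ⊆ D → (↑s : Set A).Pairwise (fun x y => x ⊓ y = ⊥) →
      ↑t ⊆ D → (↑t : Set A).Pairwise (fun x y => x ⊓ y = ⊥) →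
      s.sup id = t.sup id → ∑ x ∈ s, μ x = ∑ y ∈ t, μ y := by
    intro s t hsD hsP htD htP hst
    have h1 : ∀ x ∈ s, μ x = ∑ y ∈ t, μ0 (x ⊓ y) := by
      intro x hx
      exact L1 t htD htP x (hsD hx) (hst ▸ Finset.le_sup (f := id) hx)
    have h2 : ∀ y ∈ t, μ y = ∑ x ∈ s, μ0 (y ⊓ x) := by
      intro y hy
      exact L1 s hsD hsP y (htD hy) (hst ▸ Finset.le_sup (f := id) hy)
    rw [Finset.sum_congr rfl h1, Finset.sum_congr rfl h2, Finset.sum_comm]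
    apply Finset.sum_congr rfl
    intro y _
    apply Finset.sum_congr rfl
    intro x _
    rw [inf_comm]
  -- the class of disjoint sums from D
  set Q : A → Prop := fun a => ∃ s : Finset A, ↑s ⊆ D ∧
      (↑s : Set A).Pairwise (fun x y => x ⊓ y = ⊥) ∧ a = s.sup id with hQdef
  have hbotQ : Q ⊥ := ⟨∅, by simp, by simp, by simp⟩
  have hDQ : ∀ d ∈ D, Q d := by
    intro d hd
    exact ⟨{d}, by simpa using hd, by simp, by simp⟩
  -- disjoint union
  have hdisjQ : ∀ a b : A, Q a → Q b → a ⊓ b = ⊥ → Q (a ⊔ b) := by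
    rintro a b ⟨s, hsD, hsP, rfl⟩ ⟨t, htD, htP, rfl⟩ hab
    refine ⟨s ∪ t, ?_, ?_, ?_⟩
    · rw [Finset.coe_union]; exact Set.union_subset hsD htD
    · rw [Finset.coe_union]
      intro x hx y hy hxy
      rcases hx with hx | hx <;> rcases hy with hy | hy
      · exact hsP hx hy hxy
      · have : x ⊓ y ≤ s.sup id ⊓ t.sup id :=
          inf_le_inf (Finset.le_sup (f := id) hx) (Finset.le_sup (f := id) hy)
        rw [hab] at this; exact le_bot_iff.mp this
      · have : x ⊓ y ≤ t.sup id ⊓ s.sup id :=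
          inf_le_inf (Finset.le_sup (f := id) hx) (Finset.le_sup (f := id) hy)
        rw [inf_comm (t.sup id) (s.sup id), hab] at this; exact le_bot_iff.mp this
      · exact htP hx hy hxy
    · rw [Finset.sup_union]
  -- meet
  have hinfQ : ∀ a b : A, Q a → Q b → Q (a ⊓ b) := by
    rintro a b ⟨s, hsD, hsP, rfl⟩ ⟨t, htD, htP, rfl⟩
    set u := ((s ×ˢ t).image (fun p => p.1 ⊓ p.2)).erase ⊥ with hu
    refine ⟨u, ?_, ?_, ?_⟩
    · intro z hz
      simp only [hu, Finset.coe_erase, Set.mem_diff, Finset.coe_image,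
        Set.mem_image, Finset.mem_coe, Finset.mem_product, Set.mem_singleton_iff] at hz
      obtain ⟨⟨⟨x, y⟩, ⟨hx, hy⟩, rfl⟩, hne⟩ := hz
      exact hprod x (hsD hx) y (htD hy) hne
    · intro z hz w hw hzw
      simp only [hu, Finset.coe_erase, Set.mem_diff, Finset.coe_image,
        Set.mem_image, Finset.mem_coe, Finset.mem_product, Set.mem_singleton_iff] at hz hw
      obtain ⟨⟨⟨x, y⟩, ⟨hx, hy⟩, rfl⟩, hne⟩ := hz
      obtain ⟨⟨⟨x', y'⟩, ⟨hx', hy'⟩, rfl⟩, hne'⟩ := hw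
      by_contra hc
      have hxx : x = x' := by
        by_contra hxx
        have h0 : x ⊓ x' = ⊥ := hsP hx hx' hxx
        exact hc (le_bot_iff.mp (h0 ▸
          inf_le_inf (inf_le_left) (inf_le_left)))
      have hyy : y = y' := by
        by_contra hyy
        have h0 : y ⊓ y' = ⊥ := htP hy hy' hyy
        exact hc (le_bot_iff.mp (h0 ▸
          inf_le_inf (inf_le_right) (inf_le_right)))
      exact hzw (by rw [hxx, hyy])
    · rw [hu, Finset.sup_erase_bot, Finset.sup_image]
      rw [Finset.sup_product_left]
      have : ∀ x : A, (t.sup fun y => ((fun p : A × A => p.1 ⊓ p.2) ∘ fun y => (x, y)) y)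
          = x ⊓ t.sup id := by
        intro x
        rw [Finset.sup_inf_distrib_left]
        rfl
      calc s.sup id ⊓ t.sup id
          = s.sup fun x => x ⊓ t.sup id := Finset.sup_inf_distrib_right s id (t.sup id)
        _ = _ := by
            apply Finset.sup_congr rfl
            intro x _
            rw [← this x]
            rfl
  -- difference with a single element of D
  have hsdiffD : ∀ a : A, Q a → ∀ d ∈ D, Q (a \ d) := by
    rintro a ⟨s, hsD, hsP, rfl⟩ d hd
    have hrep : ∀ x ∈ s, ∃ r : Finset A, ↑r ⊆ D ∧
        (↑r : Set A).Pairwise (fun x y => x ⊓ y = ⊥) ∧ x \ d = r.sup id := by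
      intro x hx
      exact hdiff x (hsD hx) d hd
    choose! r hrD hrP hrsup using hrep
    refine ⟨s.biUnion r, ?_, ?_, ?_⟩
    · intro z hz
      simp only [Finset.coe_biUnion, Set.mem_iUnion, Finset.mem_coe] at hz
      obtain ⟨x, hx, hzx⟩ := hz
      exact hrD x hx hzx
    · intro z hz w hw hzw
      simp only [Finset.coe_biUnion, Set.mem_iUnion, Finset.mem_coe] at hz hw
      obtain ⟨x, hx, hzx⟩ := hz
      obtain ⟨y, hy, hwy⟩ := hw
      by_cases hxy : x = y
      · subst hxy
        exact hrP x hx hzx hwy hzw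
      · have h0 : x ⊓ y = ⊥ := hsP hx hy hxy
        have hz' : z ≤ x := le_trans (Finset.le_sup (f := id) hzx)
          (by rw [← hrsup x hx]; exact sdiff_le)
        have hw' : w ≤ y := le_trans (Finset.le_sup (f := id) hwy)
          (by rw [← hrsup y hy]; exact sdiff_le)
        exact le_bot_iff.mp (h0 ▸ inf_le_inf hz' hw')
    · rw [Finset.sup_biUnion]
      rw [← Finset.sup_sdiff_right]
      apply Finset.sup_congr rfl
      intro x hx
      exact (hrsup x hx)
  -- difference with anything in Q
  have hsdiffQ : ∀ a b : A, Q a → Q b → Q (a \ b) := by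
    rintro a b ha ⟨t, htD, htP, rfl⟩
    clear htP
    induction t using Finset.induction_on generalizing a with
    | empty => simpa using ha
    | insert _ _ hx ih =>
      rename_i x t
      rw [Finset.sup_insert, id_eq]
      have h1 : a \ (x ⊔ t.sup id) = (a \ x) \ t.sup id := sdiff_sdiff_left.symm
      rw [h1]
      apply ih
      · exact hsdiffD a ha x (htD (by simp))
      · intro y hy
        exact htD (by simp [hy])
  have hcomplQ : ∀ a : A, Q a → Q aᶜ := by
    intro a ha
    rw [← top_sdiff]
    exact hsdiffQ ⊤ a (hDQ ⊤ htopD) ha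
  have hsupQ : ∀ a b : A, Q a → Q b → Q (a ⊔ b) := by
    intro a b ha hb
    have h1 : a ⊔ b = a ⊔ (b \ a) := (sup_sdiff_self_right a b).symm
    rw [h1]
    exact hdisjQ a (b \ a) ha (hsdiffQ b a hb ha) (inf_sdiff_self_right)
  have hQ : ∀ a : A, Q a := by
    intro a
    induction hgen a with
    | base h => exact hDQ _ h
    | sup _ _ ih1 ih2 => exact hsupQ _ _ ih1 ih2
    | inf _ _ ih1 ih2 => exact hinfQ _ _ ih1 ih2
    | compl _ ih => exact hcomplQ _ ih
  choose rep hrepD hrepP hrepSup using hQ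
  have key : ∀ a : A, ∀ s : Finset A, ↑s ⊆ D →
      (↑s : Set A).Pairwise (fun x y => x ⊓ y = ⊥) → a = s.sup id →
      (∑ x ∈ rep a, μ x) = ∑ x ∈ s, μ x := by
    intro a s hsD hsP h
    exact L2 (rep a) s (hrepD a) (hrepP a) hsD hsP ((hrepSup a).symm.trans h)
  have hnonneg : ∀ a : A, 0 ≤ ∑ x ∈ rep a, μ x := by
    intro a
    exact Finset.sum_nonneg fun x hx => le_of_lt (hrange x (hrepD a hx)).1
  have hbar_bot : (∑ x ∈ rep (⊥ : A), μ x) = 0 := by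
    rw [key ⊥ ∅ (by simp) (by simp) (by simp)]
    simp
  have hbar_add : ∀ a b : A, a ⊓ b = ⊥ →
      (∑ x ∈ rep (a ⊔ b), μ x) = (∑ x ∈ rep a, μ x) + ∑ x ∈ rep b, μ x := by
    intro a b hab
    have hdisj : Disjoint (rep a) (rep b) := by
      rw [Finset.disjoint_left]
      intro u hua hub
      have h1 : u ≤ a := by rw [hrepSup a]; exact Finset.le_sup (f := id) hua
      have h2 : u ≤ b := by rw [hrepSup b]; exact Finset.le_sup (f := id) hub
      have : u = ⊥ := le_bot_iff.mp (hab ▸ le_inf h1 h2)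
      exact hbotD (this ▸ hrepD a hua)
    have hP : (↑(rep a ∪ rep b) : Set A).Pairwise (fun x y => x ⊓ y = ⊥) := by
      rw [Finset.coe_union]
      intro x hx y hy hxy
      rcases hx with hx | hx <;> rcases hy with hy | hy
      · exact hrepP a hx hy hxy
      · have h1 : x ≤ a := by rw [hrepSup a]; exact Finset.le_sup (f := id) hx
        have h2 : y ≤ b := by rw [hrepSup b]; exact Finset.le_sup (f := id) hy
        exact le_bot_iff.mp (hab ▸ inf_le_inf h1 h2)
      · have h1 : x ≤ b := by rw [hrepSup b]; exact Finset.le_sup (f := id) hx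
        have h2 : y ≤ a := by rw [hrepSup a]; exact Finset.le_sup (f := id) hy
        rw [inf_comm]
        exact le_bot_iff.mp (hab ▸ inf_le_inf h2 h1)
      · exact hrepP b hx hy hxy
    have hsub : ↑(rep a ∪ rep b) ⊆ D := by
      rw [Finset.coe_union]
      exact Set.union_subset (hrepD a) (hrepD b)
    have hsup : a ⊔ b = (rep a ∪ rep b).sup id := by
      rw [Finset.sup_union, ← hrepSup a, ← hrepSup b]
    rw [key (a ⊔ b) (rep a ∪ rep b) hsub hP hsup, Finset.sum_union hdisj]
  have hbar_pos : ∀ a : A, a ≠ ⊥ → 0 < ∑ x ∈ rep a, μ x := by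
    intro a ha
    have hne : (rep a).Nonempty := by
      rw [Finset.nonempty_iff_ne_empty]
      rintro h
      apply ha
      rw [hrepSup a, h]
      simp
    exact Finset.sum_pos (fun x hx => (hrange x (hrepD a hx)).1) hne
  have hbar_mono : ∀ a b : A, a ≤ b →
      (∑ x ∈ rep a, μ x) ≤ ∑ x ∈ rep b, μ x := by
    intro a b hab
    have h1 : a ⊔ b \ a = b := sup_sdiff_cancel' le_rfl hab
    have h2 := hbar_add a (b \ a) inf_sdiff_self_right
    rw [h1] at h2
    rw [h2]
    have := hnonneg (b \ a)
    linarith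
  constructor
  · intro a
    exact ⟨rep a, fun x hx => Or.inl (hrepD a hx), hrepP a, hrepSup a⟩
  refine ⟨fun a => ∑ x ∈ rep a, μ x, ?_, hbar_bot, hbar_add, hbar_pos, ?_, ?_⟩
  · intro d hd
    show (∑ x ∈ rep d, μ x) = μ d
    rw [key d {d} (by simpa using hd) (by simp) (by simp)]
    simp
  · intro a _
    show (∑ x ∈ rep a, μ x) = _
    symm
    apply IsGreatest.csSup_eq
    constructor
    · refine ⟨rep a, hrepD a, ?_, hrepP a, rfl⟩
      intro y hy
      rw [hrepSup a]
      exact Finset.le_sup (f := id) hy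
    · rintro x ⟨s, hsD, hsle, hsP, rfl⟩
      have h1 : (∑ y ∈ s, μ y) = ∑ x ∈ rep (s.sup id), μ x :=
        (key (s.sup id) s hsD hsP rfl).symm
      rw [h1]
      exact hbar_mono _ _ (Finset.sup_le fun y hy => hsle y hy)
  · intro ν hν1 hν2 hν3
    have hνbot : ν ⊥ = 0 := by
      have := hν2 ⊥ ⊥ (by simp)
      simp only [sup_idem] at this
      linarith
    have hνsum : ∀ s : Finset A, (↑s : Set A).Pairwise (fun x y => x ⊓ y = ⊥) →
        ν (s.sup id) = ∑ x ∈ s, ν x := by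
      intro s
      induction s using Finset.induction_on with
      | empty => intro _; simpa using hνbot
      | insert _ _ hx ih =>
        rename_i x t
        intro hP
        have hd : x ⊓ t.sup id = ⊥ := by
          rw [Finset.sup_inf_distrib_left t id x]
          rw [Finset.sup_eq_bot_iff]
          intro y hy
          exact hP (by simp) (by simp [hy]) (by rintro rfl; exact hx hy)
        rw [Finset.sup_insert, id_eq, hν2 x (t.sup id) hd, Finset.sum_insert hx,
          ih (hP.mono (by rw [Finset.coe_insert]; exact Set.subset_insert x ↑t))]
    funext a
    calc ν a = ν ((rep a).sup id) := by rw [← hrepSup a]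
      _ = ∑ x ∈ rep a, ν x := hνsum (rep a) (hrepP a)
      _ = ∑ x ∈ rep a, μ x := Finset.sum_congr rfl fun x hx => hν1 x (hrepD a hx)
end

section
/- In the closure argument for the previous lemma: if a Boolean algebra A is generated by a set D containing 1 that is closed under nonzero products and such that every difference a − b of elements of D is a finite disjoint sum of elements of D, then every element of A is a finite disjoint sum of elements of D ∪ {0}. -/
section

variable {A : Type*} [BooleanAlgebra A]

def IsDisjointSum (S : Set A) (a : A) : Prop :=
  ∃ s : Finset A, ↑s ⊆ S ∧ (↑s : Set A).Pairwise (fun x y => x ⊓ y = ⊥) ∧ a = s.sup id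

namespace IsDisjointSum

variable {S T : Set A} {a b : A}

theorem mono (hST : S ⊆ T) (ha : IsDisjointSum S a) : IsDisjointSum T a :=
  let ⟨s, hsS, hs, hsa⟩ := ha
  ⟨s, hsS.trans hST, hs, hsa⟩

theorem of_mem (ha : a ∈ S) : IsDisjointSum S a :=
  ⟨{a}, by simpa using ha, by simp, by simp⟩

theorem sup_of_inf_eq_bot (hab : a ⊓ b = ⊥) (ha : IsDisjointSum S a) (hb : IsDisjointSum S b) :
    IsDisjointSum S (a ⊔ b) := by
  classical
  obtain ⟨s, hsS, hs, rfl⟩ := ha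
  obtain ⟨t, htT, ht, rfl⟩ := hb
  have hst : ∀ x ∈ s, ∀ y ∈ t, x ⊓ y = ⊥ := fun x hx y hy =>
    le_bot_iff.mp (hab ▸ inf_le_inf (Finset.le_sup (f := id) hx) (Finset.le_sup (f := id) hy))
  refine ⟨s ∪ t, by simpa using Set.union_subset hsS htT, ?_, Finset.sup_union.symm⟩
  rw [Finset.coe_union, Set.pairwise_union]
  exact ⟨hs, ht, fun x hx y hy _ => ⟨hst x hx y hy, inf_comm y x ▸ hst x hx y hy⟩⟩

theorem inf (hS : ∀ x ∈ S, ∀ y ∈ S, x ⊓ y ∈ S) (ha : IsDisjointSum S a)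
    (hb : IsDisjointSum S b) : IsDisjointSum S (a ⊓ b) := by
  classical
  obtain ⟨s, hsS, hs, rfl⟩ := ha
  obtain ⟨t, htT, ht, rfl⟩ := hb
  refine ⟨(s ×ˢ t).image (fun p => p.1 ⊓ p.2), ?_, ?_, ?_⟩
  · simp only [Finset.coe_image, Finset.coe_product, Set.image_subset_iff]
    exact fun p ⟨hp₁, hp₂⟩ => hS _ (hsS hp₁) _ (htT hp₂)
  · simp only [Finset.coe_image, Finset.coe_product]
    rintro _ ⟨⟨x₁, y₁⟩, ⟨hx₁, hy₁⟩, rfl⟩ _ ⟨⟨x₂, y₂⟩, ⟨hx₂, hy₂⟩, rfl⟩ hne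
    by_cases hx : x₁ = x₂
    · subst hx
      have hy : y₁ ≠ y₂ := fun h => hne (by rw [h])
      exact le_bot_iff.mp (ht hy₁ hy₂ hy ▸ inf_le_inf inf_le_right inf_le_right)
    · exact le_bot_iff.mp (hs hx₁ hx₂ hx ▸ inf_le_inf inf_le_left inf_le_left)
  · rw [Finset.sup_image, Finset.sup_inf_sup]
    rfl

theorem finset_inf {ι : Type*} (hS : ∀ x ∈ S, ∀ y ∈ S, x ⊓ y ∈ S) (htop : ⊤ ∈ S)
    {s : Finset ι} {f : ι → A} (hf : ∀ i ∈ s, IsDisjointSum S (f i)) :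
    IsDisjointSum S (s.inf f) :=
  Finset.inf_induction (of_mem htop) (fun _ ha _ hb => ha.inf hS hb) hf

theorem compl (hS : ∀ x ∈ S, ∀ y ∈ S, x ⊓ y ∈ S) (htop : ⊤ ∈ S)
    (hcompl : ∀ x ∈ S, IsDisjointSum S xᶜ) (ha : IsDisjointSum S a) : IsDisjointSum S aᶜ := by
  obtain ⟨s, hsS, -, rfl⟩ := ha
  rw [Finset.compl_sup]
  exact finset_inf hS htop fun x hx => hcompl x (hsS hx)

theorem sup (hS : ∀ x ∈ S, ∀ y ∈ S, x ⊓ y ∈ S) (htop : ⊤ ∈ S)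
    (hcompl : ∀ x ∈ S, IsDisjointSum S xᶜ) (ha : IsDisjointSum S a) (hb : IsDisjointSum S b) :
    IsDisjointSum S (a ⊔ b) := by
  rw [← sup_sdiff_self_right]
  refine ha.sup_of_inf_eq_bot (disjoint_iff.mp disjoint_sdiff_self_right) ?_
  rw [sdiff_eq]
  exact hb.inf hS (ha.compl hS htop hcompl)

end IsDisjointSum

theorem inf_mem_union_bot {D : Set A} (hprod : ∀ a ∈ D, ∀ b ∈ D, a ⊓ b ≠ ⊥ → a ⊓ b ∈ D) :
    ∀ x ∈ D ∪ {⊥}, ∀ y ∈ D ∪ {⊥}, x ⊓ y ∈ D ∪ {⊥} := by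
  rintro x (hx | rfl) y (hy | rfl)
  · by_cases hxy : x ⊓ y = ⊥
    · exact Or.inr hxy
    · exact Or.inl (hprod x hx y hy hxy)
  all_goals simp

theorem isDisjointSum_compl_of_sdiff {D : Set A} (htopD : ⊤ ∈ D)
    (hdiff : ∀ a ∈ D, ∀ b ∈ D, IsDisjointSum D (a \ b)) :
    ∀ x ∈ D ∪ {⊥}, IsDisjointSum (D ∪ {⊥}) xᶜ := by
  rintro x (hx | rfl)
  · rw [← top_sdiff]
    exact (hdiff ⊤ htopD x hx).mono Set.subset_union_left
  · rw [compl_bot]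
    exact .of_mem (Or.inl htopD)

end

theorem stmt7_general {A : Type*} [BooleanAlgebra A] (D : Set A)
    (htopD : ⊤ ∈ D)
    (hprod : ∀ a ∈ D, ∀ b ∈ D, a ⊓ b ≠ ⊥ → a ⊓ b ∈ D)
    (hdiff : ∀ a ∈ D, ∀ b ∈ D, ∃ s : Finset A, ↑s ⊆ D ∧
      (↑s : Set A).Pairwise (fun x y => x ⊓ y = ⊥) ∧ a \ b = s.sup id)
    (a : A) (ha : BoolGen D a) :
    ∃ s : Finset A, ↑s ⊆ D ∪ {⊥} ∧
      (↑s : Set A).Pairwise (fun x y => x ⊓ y = ⊥) ∧ a = s.sup id := by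
  have hS := inf_mem_union_bot hprod
  have htop : ⊤ ∈ D ∪ {⊥} := Or.inl htopD
  have hcompl := isDisjointSum_compl_of_sdiff htopD hdiff
  change IsDisjointSum (D ∪ {⊥}) a
  induction ha with
  | base hx => exact .of_mem (Or.inl hx)
  | sup _ _ hx hy => exact hx.sup hS htop hcompl hy
  | inf _ _ hx hy => exact hx.inf hS hy
  | compl _ hx => exact hx.compl hS htop hcompl

/-- Closure lemma: if the Boolean algebra `A` is generated by `D` with `1 ∈ D`, `D`
closed under nonzero products, and differences of elements of `D` being finite disjoint
sums of elements of `D`, then every element of `A` is a finite disjoint sum of elements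
of `D ∪ {0}`. -/
theorem stmt7 {A : Type*} [BooleanAlgebra A] (D : Set A)
    (hbotD : ⊥ ∉ D) (htopD : ⊤ ∈ D)
    (hprod : ∀ a ∈ D, ∀ b ∈ D, a ⊓ b ≠ ⊥ → a ⊓ b ∈ D)
    (hdiff : ∀ a ∈ D, ∀ b ∈ D, ∃ s : Finset A, ↑s ⊆ D ∧
      (↑s : Set A).Pairwise (fun x y => x ⊓ y = ⊥) ∧ a \ b = s.sup id)
    (a : A) (ha : BoolGen D a) :
    ∃ s : Finset A, ↑s ⊆ D ∪ {⊥} ∧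
      (↑s : Set A).Pairwise (fun x y => x ⊓ y = ⊥) ∧ a = s.sup id :=
  stmt7_general D htopD hprod hdiff a ha
end

section
/- Let A_{0∧1} <∘ A₀, A₁ <∘ A_{0∨1} be a commuting square of complete Boolean algebras with complete embeddings (identity inclusions), with projections h_{ji} : A_j → A_i defined by h_{ji}(a) = ∏{b ∈ A_i : b ≥ a}. Then the following are equivalent: (1) for all a₀ ∈ A₀ and a₁ ∈ A₁, if h_{0,0∧1}(a₀) · h_{1,0∧1}(a₁) ≠ 0 then a₀ · a₁ ≠ 0 in A_{0∨1}; (2) for all a₁ ∈ A₁, h_{0∨1,0}(a₁) = h_{1,0∧1}(a₁). -/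
/-!
Both conditions are statements about disjointness from elements of `A₀`. For `a₀ ∈ A₀`, being
disjoint from `a₁` is the same as being disjoint from `h_{0∨1,0}(a₁)`, and for `c ∈ A_{0∧1}`,
`h_{0,0∧1}(a₀)` is disjoint from `c` iff `a₀` is; so (1) says that every `a₀ ∈ A₀` disjoint from
`h_{0∨1,0}(a₁)` is disjoint from `h_{1,0∧1}(a₁)`. Testing with the complement of
`h_{0∨1,0}(a₁) ∈ A₀` turns this into `h_{1,0∧1}(a₁) ≤ h_{0∨1,0}(a₁)`, and the reverse inequality
always holds since `A_{0∧1} ⊆ A₀`.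
-/

/-- The projection onto a complete subalgebra `S`: `h(a) = ∏ {b ∈ S : b ≥ a}`. -/
noncomputable def projSub {B : Type*} [CompleteBooleanAlgebra B] (S : Set B) (a : B) : B :=
  sInf {b | b ∈ S ∧ a ≤ b}

section ProjSub

variable {B : Type*} [CompleteBooleanAlgebra B] {S T : Set B} {a b : B}

lemma le_projSub (S : Set B) (a : B) : a ≤ projSub S a :=
  le_sInf fun _ hb => hb.2

lemma projSub_le (hb : b ∈ S) (h : a ≤ b) : projSub S a ≤ b :=
  sInf_le ⟨hb, h⟩

lemma projSub_mem (hinf : ∀ T : Set B, T ⊆ S → sInf T ∈ S) (a : B) : projSub S a ∈ S :=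
  hinf _ fun _ hb => hb.1

lemma projSub_anti (hST : S ⊆ T) (a : B) : projSub T a ≤ projSub S a :=
  le_sInf fun _ hb => projSub_le (hST hb.1) hb.2

lemma disjoint_projSub_left_iff (hcompl : ∀ x ∈ S, xᶜ ∈ S) (hb : b ∈ S) :
    Disjoint (projSub S a) b ↔ Disjoint a b := by
  simp only [← le_compl_iff_disjoint_right]
  exact ⟨(le_projSub S a).trans, projSub_le (hcompl b hb)⟩

lemma disjoint_projSub_right_iff (hcompl : ∀ x ∈ S, xᶜ ∈ S) (hb : b ∈ S) :
    Disjoint b (projSub S a) ↔ Disjoint b a := by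
  rw [disjoint_comm, disjoint_projSub_left_iff hcompl hb, disjoint_comm]

end ProjSub

lemma forall_disjoint_imp_iff_le {B : Type*} [BooleanAlgebra B] {S : Set B} {x y : B}
    (hx : xᶜ ∈ S) : (∀ a ∈ S, Disjoint a x → Disjoint a y) ↔ y ≤ x :=
  ⟨fun h => disjoint_compl_left_iff.mp (h _ hx disjoint_compl_left),
    fun hyx _ _ ha => ha.mono_right hyx⟩

theorem stmt9_general {B : Type*} [CompleteBooleanAlgebra B] (S01 S0 S1 : Set B)
    (h010 : S01 ⊆ S0)
    (hinf01 : ∀ T : Set B, T ⊆ S01 → sInf T ∈ S01)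
    (hcompl01 : ∀ x ∈ S01, xᶜ ∈ S01)
    (hinf0 : ∀ T : Set B, T ⊆ S0 → sInf T ∈ S0)
    (hcompl0 : ∀ x ∈ S0, xᶜ ∈ S0) :
    (∀ a0 ∈ S0, ∀ a1 ∈ S1, projSub S01 a0 ⊓ projSub S01 a1 ≠ ⊥ → a0 ⊓ a1 ≠ ⊥) ↔
    (∀ a1 ∈ S1, projSub S0 a1 = projSub S01 a1) := by
  have reformulate : ∀ a0 ∈ S0, ∀ a1,
      (projSub S01 a0 ⊓ projSub S01 a1 ≠ ⊥ → a0 ⊓ a1 ≠ ⊥) ↔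
        (Disjoint a0 (projSub S0 a1) → Disjoint a0 (projSub S01 a1)) := by
    intro a0 ha0 a1
    rw [not_imp_not, ← disjoint_iff, ← disjoint_iff,
      disjoint_projSub_left_iff hcompl01 (projSub_mem hinf01 a1),
      disjoint_projSub_right_iff hcompl0 ha0]
  calc _ ↔ ∀ a1 ∈ S1, ∀ a0 ∈ S0, Disjoint a0 (projSub S0 a1) → Disjoint a0 (projSub S01 a1) :=
        ⟨fun h a1 ha1 a0 ha0 => (reformulate a0 ha0 a1).mp (h a0 ha0 a1 ha1),
          fun h a0 ha0 a1 ha1 => (reformulate a0 ha0 a1).mpr (h a1 ha1 a0 ha0)⟩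
    _ ↔ ∀ a1 ∈ S1, projSub S01 a1 ≤ projSub S0 a1 :=
        forall₂_congr fun a1 _ => forall_disjoint_imp_iff_le (hcompl0 _ (projSub_mem hinf0 a1))
    _ ↔ _ := forall₂_congr fun a1 _ =>
        ⟨(projSub_anti h010 a1).antisymm, fun h => h.symm.le⟩

/-- Correctness of a square of complete Boolean algebras `A_{0∧1} ⊆ A₀, A₁ ⊆ A_{0∨1}`
(modelled as complete subalgebras `S01 ⊆ S0, S1` of the ambient algebra `B = A_{0∨1}`)
is equivalent to the projection identity `h_{0∨1,0}(a₁) = h_{1,0∧1}(a₁)` for all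
`a₁ ∈ A₁`. -/
theorem stmt9 {B : Type*} [CompleteBooleanAlgebra B] (S01 S0 S1 : Set B)
    (h010 : S01 ⊆ S0) (h011 : S01 ⊆ S1)
    (hinf01 : ∀ T : Set B, T ⊆ S01 → sInf T ∈ S01)
    (hcompl01 : ∀ x ∈ S01, xᶜ ∈ S01)
    (hinf0 : ∀ T : Set B, T ⊆ S0 → sInf T ∈ S0)
    (hcompl0 : ∀ x ∈ S0, xᶜ ∈ S0)
    (hinf1 : ∀ T : Set B, T ⊆ S1 → sInf T ∈ S1)
    (hcompl1 : ∀ x ∈ S1, xᶜ ∈ S1) :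
    (∀ a0 ∈ S0, ∀ a1 ∈ S1, projSub S01 a0 ⊓ projSub S01 a1 ≠ ⊥ → a0 ⊓ a1 ≠ ⊥) ↔
    (∀ a1 ∈ S1, projSub S0 a1 = projSub S01 a1) :=
  stmt9_general S01 S0 S1 h010 hinf01 hcompl01 hinf0 hcompl0
end

section
/- Let A be a complete Boolean algebra with a finitely additive strictly positive measure μ. Let g ∈ ω^ω, let φ̇ be an A-name for a g-slalom, and h(n) = n·g(n). Then there is an h-slalom ψ in the ground model, namely ψ(n) = {k : μ(⟦k ∈ φ̇(n)⟧) ≥ 1/n}, such that for every f ∈ ω^ω, if ψ does not localize f then the trivial condition forces that φ̇ does not localize f. -/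
/-!
Let `a k = ⟦k ∈ φ̇(n)⟧`. Since `φ̇(n)` has at most `g(n)` elements, every meet of `g(n) + 1`
of the `a k` vanishes. By the layer-cake formula, `∑_{k ∈ s} μ (a k) = ∑_{j ≥ 1} μ ⟦at least j of
the a k, k ∈ s, hold⟧`, and the terms with `j > g(n)` vanish while the others are at most `1`;
hence `∑_k μ (a k) ≤ g(n)` and at most `n · g(n)` of the `a k` have measure `≥ 1/n`.
If `f(n) ∉ ψ(n)` for infinitely many `n`, then every condition below all `⟦f(n) ∈ φ̇(n)⟧`,
`n ≥ n₀`, has measure `< 1/n` for arbitrarily large `n`, so it is `⊥` by strict positivity.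
-/

open Finset Filter

section AtLeast

variable {ι A : Type*} [DistribLattice A] [BoundedOrder A]

def atLeast (a : ι → A) (s : Finset ι) (j : ℕ) : A :=
  (s.powersetCard j).sup fun t => t.inf a

@[simp]
lemma atLeast_zero (a : ι → A) (s : Finset ι) : atLeast a s 0 = ⊤ := by
  simp [atLeast]

lemma atLeast_eq_bot_of_card_lt (a : ι → A) {s : Finset ι} {j : ℕ} (h : s.card < j) :
    atLeast a s j = ⊥ := by
  rw [atLeast, powersetCard_eq_empty.2 h, sup_empty]

lemma atLeast_succ_le (a : ι → A) (s : Finset ι) (j : ℕ) :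
    atLeast a s (j + 1) ≤ atLeast a s j := by
  refine Finset.sup_le fun t ht => ?_
  rw [mem_powersetCard] at ht
  obtain ⟨t', ht't, ht'⟩ := exists_subset_card_eq (show j ≤ t.card by omega)
  exact (inf_mono ht't).trans
    (le_sup (f := fun t => t.inf a) (mem_powersetCard.2 ⟨ht't.trans ht.1, ht'⟩))

lemma atLeast_insert_succ [DecidableEq ι] (a : ι → A) {x : ι} {s : Finset ι} (hx : x ∉ s)
    (j : ℕ) : atLeast a (insert x s) (j + 1) = atLeast a s (j + 1) ⊔ (a x ⊓ atLeast a s j) := by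
  simp only [atLeast]
  rw [powersetCard_succ_insert hx, sup_union, sup_image, sup_inf_distrib_left]
  congr 1
  refine sup_congr rfl fun t ht => ?_
  have hxt : x ∉ t := fun h => hx ((mem_powersetCard.1 ht).1 h)
  simp [inf_insert]

lemma atLeast_eq_bot_of_inf_eq_bot (a : ι → A) {m : ℕ}
    (hm : ∀ t : Finset ι, m < t.card → t.inf a = ⊥) (s : Finset ι) {j : ℕ} (hj : m < j) :
    atLeast a s j = ⊥ :=
  (Finset.sup_eq_bot_iff _ _).2 fun t ht => hm t ((mem_powersetCard.1 ht).2 ▸ hj)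

end AtLeast

section FinitelyAdditive

variable {A : Type*} [BooleanAlgebra A] {μ : A → ℝ}

lemma map_bot_of_additive (hadd : ∀ a b : A, a ⊓ b = ⊥ → μ (a ⊔ b) = μ a + μ b) :
    μ ⊥ = 0 := by
  have := hadd ⊥ ⊥ (inf_idem ⊥)
  rw [sup_idem] at this
  linarith

lemma map_sup_add_map_inf (hadd : ∀ a b : A, a ⊓ b = ⊥ → μ (a ⊔ b) = μ a + μ b) (a b : A) :
    μ (a ⊔ b) + μ (a ⊓ b) = μ a + μ b := by
  have hsup := hadd a (b \ a) inf_sdiff_self_right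
  have hb := hadd (b ⊓ a) (b \ a) (inf_inf_sdiff b a)
  rw [sup_sdiff_self_right] at hsup
  rw [sup_inf_sdiff, inf_comm] at hb
  linarith

lemma map_nonneg_of_pos (hadd : ∀ a b : A, a ⊓ b = ⊥ → μ (a ⊔ b) = μ a + μ b)
    (hpos : ∀ a : A, a ≠ ⊥ → 0 < μ a) (a : A) : 0 ≤ μ a := by
  rcases eq_or_ne a ⊥ with rfl | ha
  · exact (map_bot_of_additive hadd).ge
  · exact (hpos a ha).le

lemma map_mono_of_pos (hadd : ∀ a b : A, a ⊓ b = ⊥ → μ (a ⊔ b) = μ a + μ b)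
    (hpos : ∀ a : A, a ≠ ⊥ → 0 < μ a) {a b : A} (hab : a ≤ b) : μ a ≤ μ b := by
  have := hadd a (b \ a) inf_sdiff_self_right
  rw [sup_sdiff_cancel_right hab] at this
  linarith [map_nonneg_of_pos hadd hpos (b \ a)]

lemma sum_map_eq_sum_map_atLeast {ι : Type*}
    (hadd : ∀ a b : A, a ⊓ b = ⊥ → μ (a ⊔ b) = μ a + μ b) (a : ι → A) {N : ℕ}
    {s : Finset ι} (hN : s.card ≤ N) :
    ∑ k ∈ s, μ (a k) = ∑ j ∈ range N, μ (atLeast a s (j + 1)) := by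
  classical
  induction s using Finset.induction_on generalizing N with
  | empty =>
    refine (sum_eq_zero fun j _ => ?_).symm
    rw [atLeast_eq_bot_of_card_lt a (by simp), map_bot_of_additive hadd]
  | @insert x s hx ih =>
    rw [card_insert_of_notMem hx] at hN
    -- Modularity splits each layer of `insert x s` into the layer of `s` and a telescoping term.
    have hlayer : ∀ j, μ (atLeast a (insert x s) (j + 1)) = μ (atLeast a s (j + 1)) +
        (μ (a x ⊓ atLeast a s j) - μ (a x ⊓ atLeast a s (j + 1))) := by
      intro j
      have hmeet : atLeast a s (j + 1) ⊓ (a x ⊓ atLeast a s j) = a x ⊓ atLeast a s (j + 1) := by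
        rw [inf_left_comm, inf_eq_left.2 (atLeast_succ_le a s j)]
      have := map_sup_add_map_inf hadd (atLeast a s (j + 1)) (a x ⊓ atLeast a s j)
      rw [hmeet] at this
      rw [atLeast_insert_succ a hx]
      linarith
    simp only [hlayer]
    rw [sum_insert hx, ih (N := N) (by omega), sum_add_distrib,
      sum_range_sub' (fun j => μ (a x ⊓ atLeast a s j)), atLeast_zero, inf_top_eq,
      atLeast_eq_bot_of_card_lt a (show s.card < N by omega), inf_bot_eq,
      map_bot_of_additive hadd]
    ring

lemma sum_map_le_of_inf_eq_bot {ι : Type*}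
    (hadd : ∀ a b : A, a ⊓ b = ⊥ → μ (a ⊔ b) = μ a + μ b) (htop : μ ⊤ = 1)
    (hpos : ∀ a : A, a ≠ ⊥ → 0 < μ a) (a : ι → A) {m : ℕ}
    (hm : ∀ t : Finset ι, m < t.card → t.inf a = ⊥) (s : Finset ι) :
    ∑ k ∈ s, μ (a k) ≤ m := by
  rw [sum_map_eq_sum_map_atLeast hadd a (N := m + s.card) (by omega), sum_range_add]
  have hlow : ∑ j ∈ range m, μ (atLeast a s (j + 1)) ≤ m := by
    simpa using sum_le_card_nsmul (range m) (fun j => μ (atLeast a s (j + 1))) 1 fun j _ =>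
      htop ▸ map_mono_of_pos hadd hpos le_top
  have hhigh : ∑ j ∈ range s.card, μ (atLeast a s (m + j + 1)) = 0 :=
    sum_eq_zero fun j _ => by
      rw [atLeast_eq_bot_of_inf_eq_bot a hm s (by omega), map_bot_of_additive hadd]
  linarith

lemma card_le_mul_of_one_div_le_map {ι : Type*}
    (hadd : ∀ a b : A, a ⊓ b = ⊥ → μ (a ⊔ b) = μ a + μ b) (htop : μ ⊤ = 1)
    (hpos : ∀ a : A, a ≠ ⊥ → 0 < μ a) (a : ι → A) {m : ℕ}
    (hm : ∀ t : Finset ι, m < t.card → t.inf a = ⊥) {n : ℕ} (hn : 0 < n) {t : Finset ι}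
    (ht : ∀ k ∈ t, 1 / (n : ℝ) ≤ μ (a k)) : t.card ≤ n * m := by
  have hsum : t.card • (1 / (n : ℝ)) ≤ m :=
    (card_nsmul_le_sum t _ _ ht).trans (sum_map_le_of_inf_eq_bot hadd htop hpos a hm t)
  rw [nsmul_eq_mul, mul_one_div, div_le_iff₀ (by positivity)] at hsum
  exact_mod_cast hsum.trans_eq (mul_comm _ _)

lemma finite_setOf_one_div_le_map {ι : Type*}
    (hadd : ∀ a b : A, a ⊓ b = ⊥ → μ (a ⊔ b) = μ a + μ b) (htop : μ ⊤ = 1)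
    (hpos : ∀ a : A, a ≠ ⊥ → 0 < μ a) (a : ι → A) {m : ℕ}
    (hm : ∀ t : Finset ι, m < t.card → t.inf a = ⊥) {n : ℕ} (hn : 0 < n) :
    {k | 1 / (n : ℝ) ≤ μ (a k)}.Finite := by
  by_contra hinf
  obtain ⟨t, hts, htc⟩ := Set.Infinite.exists_subset_card_eq hinf (n * m + 1)
  have := card_le_mul_of_one_div_le_map hadd htop hpos a hm hn fun k hk => hts hk
  omega

lemma eq_bot_of_frequently_map_lt_one_div
    (hadd : ∀ a b : A, a ⊓ b = ⊥ → μ (a ⊔ b) = μ a + μ b)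
    (hpos : ∀ a : A, a ≠ ⊥ → 0 < μ a) {b : ℕ → A} {c : A}
    (hc : ∀ᶠ n in atTop, c ≤ b n) (hb : ∃ᶠ n in atTop, μ (b n) < 1 / n) : c = ⊥ := by
  by_contra hne
  have hsmall : ∀ᶠ n : ℕ in atTop, 1 / (n : ℝ) < μ c :=
    tendsto_one_div_atTop_nhds_zero_nat.eventually (gt_mem_nhds (hpos c hne))
  obtain ⟨n, hbn, hcn, hn⟩ := (hb.and_eventually (hc.and hsmall)).exists
  linarith [map_mono_of_pos hadd hpos hcn]

end FinitelyAdditive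

theorem stmt13_general {A : Type*} [CompleteBooleanAlgebra A] (μ : A → ℝ)
    (htop : μ ⊤ = 1)
    (hadd : ∀ a b : A, a ⊓ b = ⊥ → μ (a ⊔ b) = μ a + μ b)
    (hpos : ∀ a : A, a ≠ ⊥ → 0 < μ a)
    (g : ℕ → ℕ) (Φ : ℕ → ℕ → A)
    (hname : ∀ n : ℕ, ∀ s : Finset ℕ, g n < s.card → (s.inf fun k => Φ n k) = ⊥) :
    ∃ ψ : ℕ → Finset ℕ,
      (∀ n, (ψ n).card ≤ n * g n) ∧
      (∀ n, 1 ≤ n → ∀ k : ℕ, k ∈ ψ n ↔ 1 / (n : ℝ) ≤ μ (Φ n k)) ∧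
      (∀ f : ℕ → ℕ, (∀ n₀ : ℕ, ∃ n, n₀ ≤ n ∧ f n ∉ ψ n) →
        ∀ n₀ : ℕ, (⨅ (n : ℕ) (_ : n₀ ≤ n), Φ n (f n)) = ⊥) := by
  -- `0 < n` keeps `ψ 0` empty, where `1 / 0 = 0` would make the defining condition trivial.
  have hfin : ∀ n : ℕ, {k | 0 < n ∧ 1 / (n : ℝ) ≤ μ (Φ n k)}.Finite := by
    intro n
    rcases n.eq_zero_or_pos with rfl | hn
    · simp
    · exact (finite_setOf_one_div_le_map hadd htop hpos (Φ n) (hname n) hn).subset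
        fun k hk => hk.2
  refine ⟨fun n => (hfin n).toFinset, fun n => ?_,
    fun n hn k => by simp [show 0 < n from hn], ?_⟩
  · rcases n.eq_zero_or_pos with rfl | hn
    · simp
    · exact card_le_mul_of_one_div_le_map hadd htop hpos (Φ n) (hname n) hn
        fun k hk => ((hfin n).mem_toFinset.1 hk).2
  · intro f hf n₀
    refine eq_bot_of_frequently_map_lt_one_div hadd hpos
      ((eventually_ge_atTop n₀).mono fun n hn => iInf₂_le n hn) ?_
    refine ((frequently_atTop.2 hf).and_eventually (eventually_gt_atTop 0)).mono ?_
    rintro n ⟨hfn, hn⟩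
    simpa [hn] using hfn

/-- Kamburelis' localization property for algebras with a finitely additive strictly
positive measure: if `φ̇` is a name for a `g`-slalom (given by Boolean values
`Φ n k = ⟦k ∈ φ̇(n)⟧`), and `h(n) = n·g(n)`, there is a ground-model `h`-slalom `ψ`,
namely `ψ(n) = {k : μ(⟦k ∈ φ̇(n)⟧) ≥ 1/n}`, such that for every `f`, if `ψ` does not
localize `f` then it is forced that `φ̇` does not localize `f`. -/
theorem stmt13 {A : Type*} [CompleteBooleanAlgebra A] (μ : A → ℝ)
    (hbot : μ ⊥ = 0) (htop : μ ⊤ = 1)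
    (hadd : ∀ a b : A, a ⊓ b = ⊥ → μ (a ⊔ b) = μ a + μ b)
    (hpos : ∀ a : A, a ≠ ⊥ → 0 < μ a)
    (g : ℕ → ℕ) (Φ : ℕ → ℕ → A)
    (hname : ∀ n : ℕ, ∀ s : Finset ℕ, g n < s.card → (s.inf fun k => Φ n k) = ⊥) :
    ∃ ψ : ℕ → Finset ℕ,
      (∀ n, (ψ n).card ≤ n * g n) ∧
      (∀ n, 1 ≤ n → ∀ k : ℕ, k ∈ ψ n ↔ 1 / (n : ℝ) ≤ μ (Φ n k)) ∧
      (∀ f : ℕ → ℕ, (∀ n₀ : ℕ, ∃ n, n₀ ≤ n ∧ f n ∉ ψ n) →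
        ∀ n₀ : ℕ, (⨅ (n : ℕ) (_ : n₀ ≤ n), Φ n (f n)) = ⊥) :=
  stmt13_general μ htop hadd hpos g Φ hname
end

section
/- For the lattice κ × λ of pairs of ordinals ordered coordinatewise (with meets and joins given coordinatewise), and for (ξ, θ) ∈ κ × λ with ξ > 0 and θ > 0, the strict initial segment I_{ξ,θ} = {(ζ,η) : (ζ,η) < (ξ,θ)} is a nice distributive almost-lattice with ker(I_{ξ,θ}) = {(ζ,η) : ζ < ξ and η < θ}, L(I_{ξ,θ}) = {(ζ,η) : ζ < ξ and η ≤ θ}, and R(I_{ξ,θ}) = {(ζ,η) : ζ ≤ ξ and η < θ}. -/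
/-- Niceness: whenever `i < i'` both lie outside the kernel, there is `j` incomparable
with `i` such that `i' = i ∨ j`. -/
def NiceDAL (I : Type*) [SemilatticeInf I] : Prop :=
  ∀ i i' : I, i < i' → ¬ (∀ j : I, ∃ k, IsLUB {i, j} k) →
    ¬ (∀ j : I, ∃ k, IsLUB {i', j} k) →
    ∃ j : I, (¬ j ≤ i ∧ ¬ i ≤ j) ∧ IsLUB {i, j} i'

/-- The strict initial segment `I_{ξ,θ} = {(ζ,η) : (ζ,η) < (ξ,θ)}` of the coordinatewise
ordered product of the ordinals. -/
abbrev ISeg (ξ θ : Ordinal) : Type _ := {p : Ordinal × Ordinal // p < (ξ, θ)}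

noncomputable instance (ξ θ : Ordinal) : SemilatticeInf (ISeg ξ θ) :=
  Subtype.semilatticeInf fun _ _ hx _ => lt_of_le_of_lt inf_le_left hx

namespace St15
variable {ξ θ : Ordinal}

lemma mem_iff {p : Ordinal × Ordinal} : p < (ξ, θ) ↔ p.1 ≤ ξ ∧ p.2 ≤ θ ∧ (p.1 < ξ ∨ p.2 < θ) := by
  rw [Prod.lt_iff]
  constructor
  · rintro (⟨h1, h2⟩ | ⟨h1, h2⟩)
    exacts [⟨h1.le, h2, Or.inl h1⟩, ⟨h1, h2.le, Or.inr h2⟩]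
  · rintro ⟨h1, h2, (h | h)⟩
    exacts [Or.inl ⟨h, h2⟩, Or.inr ⟨h1, h⟩]

lemma le1 (i : ISeg ξ θ) : i.val.1 ≤ ξ := (mem_iff.mp i.prop).1
lemma le2 (i : ISeg ξ θ) : i.val.2 ≤ θ := (mem_iff.mp i.prop).2.1
lemma lt_or (i : ISeg ξ θ) : i.val.1 < ξ ∨ i.val.2 < θ := (mem_iff.mp i.prop).2.2

lemma coe_inf (i j : ISeg ξ θ) : (i ⊓ j).val = i.val ⊓ j.val := rfl
lemma le_def {i j : ISeg ξ θ} : i ≤ j ↔ i.val ≤ j.val := Iff.rfl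

lemma sup_mem {i j : ISeg ξ θ} (h : (i.val.1 < ξ ∧ j.val.1 < ξ) ∨ (i.val.2 < θ ∧ j.val.2 < θ)) :
    i.val ⊔ j.val < (ξ, θ) := by
  refine mem_iff.mpr ⟨sup_le (le1 i) (le1 j), sup_le (le2 i) (le2 j), ?_⟩
  rcases h with ⟨h1, h2⟩ | ⟨h1, h2⟩
  · exact Or.inl (sup_lt_iff.mpr ⟨h1, h2⟩)
  · exact Or.inr (sup_lt_iff.mpr ⟨h1, h2⟩)

lemma hub_iff (i j : ISeg ξ θ) :
    (∃ k : ISeg ξ θ, i ≤ k ∧ j ≤ k) ↔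
      (i.val.1 < ξ ∧ j.val.1 < ξ) ∨ (i.val.2 < θ ∧ j.val.2 < θ) := by
  constructor
  · rintro ⟨k, h1, h2⟩
    rcases lt_or k with h | h
    · exact Or.inl ⟨lt_of_le_of_lt (le_def.mp h1).1 h, lt_of_le_of_lt (le_def.mp h2).1 h⟩
    · exact Or.inr ⟨lt_of_le_of_lt (le_def.mp h1).2 h, lt_of_le_of_lt (le_def.mp h2).2 h⟩
  · intro h
    exact ⟨⟨i.val ⊔ j.val, sup_mem h⟩, le_def.mpr le_sup_left, le_def.mpr le_sup_right⟩

lemma isLUB_of {i j : ISeg ξ θ} (h : i.val ⊔ j.val < (ξ, θ)) :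
    IsLUB {i, j} (⟨i.val ⊔ j.val, h⟩ : ISeg ξ θ) := by
  constructor
  · rintro x (rfl | rfl)
    exacts [le_def.mpr le_sup_left, le_def.mpr le_sup_right]
  · intro k hk
    exact le_def.mpr (sup_le (le_def.mp (hk (Set.mem_insert _ _)))
      (le_def.mp (hk (Set.mem_insert_of_mem _ rfl))))

lemma isLUB_iff {i j k : ISeg ξ θ} : IsLUB {i, j} k ↔ k.val = i.val ⊔ j.val := by
  constructor
  · intro hk
    have h1 : i ≤ k := hk.1 (Set.mem_insert _ _)
    have h2 : j ≤ k := hk.1 (Set.mem_insert_of_mem _ rfl)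
    have hs : i.val ⊔ j.val < (ξ, θ) := lt_of_le_of_lt (sup_le h1 h2) k.prop
    exact le_antisymm (hk.2 (isLUB_of hs).1) (sup_le h1 h2)
  · intro hk
    have hs : i.val ⊔ j.val < (ξ, θ) := hk ▸ k.prop
    have : k = (⟨i.val ⊔ j.val, hs⟩ : ISeg ξ θ) := Subtype.ext hk
    exact this ▸ isLUB_of hs

lemma eq1 {i : ISeg ξ θ} (h : ¬ i.val.1 < ξ) : i.val.1 = ξ := le_antisymm (le1 i) (not_lt.mp h)
lemma eq2 {i : ISeg ξ θ} (h : ¬ i.val.2 < θ) : i.val.2 = θ := le_antisymm (le2 i) (not_lt.mp h)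

lemma ker_iff (hξ : 0 < ξ) (hθ : 0 < θ) (i : ISeg ξ θ) :
    (∀ j : ISeg ξ θ, ∃ k, IsLUB {i, j} k) ↔ i.val.1 < ξ ∧ i.val.2 < θ := by
  constructor
  · intro h
    constructor
    · by_contra hc
      have hj : ((0:Ordinal), θ) < (ξ, θ) := mem_iff.mpr ⟨hξ.le, le_rfl, Or.inl hξ⟩
      obtain ⟨k, hk⟩ := h ⟨(0, θ), hj⟩
      have := (hub_iff i _).mp ⟨k, hk.1 (Set.mem_insert _ _), hk.1 (Set.mem_insert_of_mem _ rfl)⟩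
      rcases this with ⟨h1, _⟩ | ⟨_, h2⟩
      exacts [hc h1, absurd h2 (lt_irrefl θ)]
    · by_contra hc
      have hj : (ξ, (0:Ordinal)) < (ξ, θ) := mem_iff.mpr ⟨le_rfl, hθ.le, Or.inr hθ⟩
      obtain ⟨k, hk⟩ := h ⟨(ξ, 0), hj⟩
      have := (hub_iff i _).mp ⟨k, hk.1 (Set.mem_insert _ _), hk.1 (Set.mem_insert_of_mem _ rfl)⟩
      rcases this with ⟨_, h1⟩ | ⟨h2, _⟩
      exacts [absurd h1 (lt_irrefl ξ), hc h2]
  · rintro ⟨h1, h2⟩ j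
    have hm : (i.val.1 < ξ ∧ j.val.1 < ξ) ∨ (i.val.2 < θ ∧ j.val.2 < θ) := by
      rcases lt_or j with h | h
      exacts [Or.inl ⟨h1, h⟩, Or.inr ⟨h2, h⟩]
    exact ⟨_, isLUB_of (sup_mem hm)⟩

end St15

open St15 in
/-- For `ξ, θ > 0`, `I_{ξ,θ}` is a nice distributive almost-lattice whose kernel is
`{(ζ,η) : ζ < ξ ∧ η < θ}`, with left part `L = {(ζ,η) : ζ < ξ ∧ η ≤ θ}` and right part
`R = {(ζ,η) : ζ ≤ ξ ∧ η < θ}` satisfying the properties of the structure theorem. -/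
theorem stmt15 (ξ θ : Ordinal) (hξ : 0 < ξ) (hθ : 0 < θ) :
    DistribAlmostLattice (ISeg ξ θ) ∧
    NiceDAL (ISeg ξ θ) ∧
    {i : ISeg ξ θ | ∀ j, ∃ k, IsLUB {i, j} k} =
      {i : ISeg ξ θ | i.val.1 < ξ ∧ i.val.2 < θ} ∧
    (let L : Set (ISeg ξ θ) := {i | i.val.1 < ξ}
     let R : Set (ISeg ξ θ) := {i | i.val.2 < θ}
     (∀ i ∈ L, ∀ j, j ≤ i → j ∈ L) ∧
     (∀ i ∈ R, ∀ j, j ≤ i → j ∈ R) ∧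
     (∀ i ∈ L, ∀ j ∈ L, ∃ k, IsLUB {i, j} k ∧ k ∈ L) ∧
     (∀ i ∈ R, ∀ j ∈ R, ∃ k, IsLUB {i, j} k ∧ k ∈ R) ∧
     L ∪ R = Set.univ ∧
     L ∩ R = {i : ISeg ξ θ | i.val.1 < ξ ∧ i.val.2 < θ} ∧
     ((L \ (L ∩ R)).Nonempty ↔ (R \ (L ∩ R)).Nonempty) ∧
     (∀ i ∈ L \ (L ∩ R), ∀ j ∈ R \ (L ∩ R), ¬ ∃ k, IsLUB {i, j} k) ∧
     (∀ i ∈ L, ∀ j ∈ R, i ⊓ j ∈ L ∩ R)) := by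
  refine ⟨?_, ?_, ?_, ?_⟩
  · -- DistribAlmostLattice
    constructor
    · -- join_exists
      intro i j h
      exact ⟨_, isLUB_of (sup_mem ((hub_iff i j).mp h))⟩
    · -- two_of_three
      intro i₀ i₁ i₂
      by_cases h01 : ∃ k, i₀ ≤ k ∧ i₁ ≤ k
      · exact Or.inl h01
      by_cases h02 : ∃ k, i₀ ≤ k ∧ i₂ ≤ k
      · exact Or.inr (Or.inl h02)
      refine Or.inr (Or.inr ((hub_iff i₁ i₂).mpr ?_))
      rw [hub_iff] at h01 h02
      push_neg at h01 h02
      rcases lt_or i₀ with h0 | h0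
      · exact Or.inr ⟨(lt_or i₁).resolve_left (not_lt.mpr (h01.1 h0)),
          (lt_or i₂).resolve_left (not_lt.mpr (h02.1 h0))⟩
      · exact Or.inl ⟨(lt_or i₁).resolve_right (not_lt.mpr (h01.2 h0)),
          (lt_or i₂).resolve_right (not_lt.mpr (h02.2 h0))⟩
    · -- distrib_join
      intro i j j' a b c ha hb hc
      rw [isLUB_iff] at ha hb hc
      refine Subtype.ext ?_
      rw [hc, coe_inf, coe_inf, ha, hb]
      exact sup_inf_left _ _ _
    · -- distrib_meet
      intro i j j' a b ha hb
      rw [isLUB_iff] at ha hb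
      refine Subtype.ext ?_
      rw [hb, coe_inf]
      simp only [coe_inf]
      rw [ha]
      exact (inf_sup_left _ _ _).symm
    · -- no_ub_cases
      intro i j j' hnub
      rw [hub_iff] at hnub
      push_neg at hnub
      by_cases h' : ∃ k, i ≤ k ∧ j' ≤ k
      · -- positive case: i ∨ (j ⊓ j') = i ∨ j'
        rw [hub_iff] at h'
        have key : i.val ⊔ (j.val ⊓ j'.val) = i.val ⊔ j'.val := by
          by_cases hi1 : i.val.1 < ξ
          · -- j1 = ξ, i2 = θ (from ¬(b_i<θ ∧ b_j<θ) since b_j<θ)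
            have hj1 : j.val.1 = ξ := eq1 (not_lt.mpr (hnub.1 hi1))
            have hj2 : j.val.2 < θ := (lt_or j).resolve_left (by rw [hj1]; exact lt_irrefl ξ)
            have hi2 : i.val.2 = θ := eq2 (fun h => absurd hj2 (not_lt.mpr (hnub.2 h)))
            have hj'1 : j'.val.1 < ξ := by
              rcases h' with ⟨_, h⟩ | ⟨h, _⟩
              · exact h
              · exact absurd h (by rw [hi2]; exact lt_irrefl θ)
            refine Prod.ext_iff.mpr ⟨?_, ?_⟩
            · show i.val.1 ⊔ (j.val.1 ⊓ j'.val.1) = i.val.1 ⊔ j'.val.1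
              rw [inf_eq_right.mpr (by rw [hj1]; exact le1 j')]
            · show i.val.2 ⊔ (j.val.2 ⊓ j'.val.2) = i.val.2 ⊔ j'.val.2
              rw [sup_eq_left.mpr (by rw [hi2]; exact le_trans inf_le_right (le2 j')),
                sup_eq_left.mpr (by rw [hi2]; exact le2 j')]
          · -- i1 = ξ, hence i2 < θ, j2 = θ
            have hi1' : i.val.1 = ξ := eq1 hi1
            have hi2 : i.val.2 < θ := (lt_or i).resolve_left hi1
            have hj2 : j.val.2 = θ := eq2 (not_lt.mpr (hnub.2 hi2))
            refine Prod.ext_iff.mpr ⟨?_, ?_⟩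
            · show i.val.1 ⊔ (j.val.1 ⊓ j'.val.1) = i.val.1 ⊔ j'.val.1
              rw [sup_eq_left.mpr (by rw [hi1']; exact le_trans inf_le_right (le1 j')),
                sup_eq_left.mpr (by rw [hi1']; exact le1 j')]
            · show i.val.2 ⊔ (j.val.2 ⊓ j'.val.2) = i.val.2 ⊔ j'.val.2
              rw [inf_eq_right.mpr (by rw [hj2]; exact le2 j')]
        refine Or.inr ⟨⟨i.val ⊔ j'.val, sup_mem h'⟩, isLUB_of (sup_mem h'), isLUB_iff.mpr ?_⟩
        show i.val ⊔ j'.val = i.val ⊔ (j ⊓ j').val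
        rw [coe_inf]
        exact key.symm
      · refine Or.inl ⟨h', ?_⟩
        rw [hub_iff] at h' ⊢
        push_neg at h'
        rintro (⟨hi1, hm1⟩ | ⟨hi2, hm2⟩)
        · have : j.val.1 ⊓ j'.val.1 < ξ := hm1
          rcases inf_lt_iff.mp this with h | h
          exacts [absurd h (not_lt.mpr (hnub.1 hi1)), absurd h (not_lt.mpr (h'.1 hi1))]
        · have : j.val.2 ⊓ j'.val.2 < θ := hm2
          rcases inf_lt_iff.mp this with h | h
          exacts [absurd h (not_lt.mpr (hnub.2 hi2)), absurd h (not_lt.mpr (h'.2 hi2))]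
    · -- meet_join_eq
      intro i j j' hn
      rw [hub_iff] at hn
      push_neg at hn
      have c1 : ξ ≤ j.val.1 ⊔ j'.val.1 := by
        by_cases h : j.val.1 < ξ
        · exact le_trans (hn.1 h) le_sup_right
        · exact le_trans (not_lt.mp h) le_sup_left
      have c2 : θ ≤ j.val.2 ⊔ j'.val.2 := by
        by_cases h : j.val.2 < θ
        · exact le_trans (hn.2 h) le_sup_right
        · exact le_trans (not_lt.mp h) le_sup_left
      have hle : i.val ≤ j.val ⊔ j'.val := Prod.le_def.mpr ⟨(le1 i).trans c1, (le2 i).trans c2⟩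
      refine isLUB_iff.mpr ?_
      rw [coe_inf, coe_inf, ← inf_sup_left]
      exact (inf_eq_left.mpr hle).symm
  · -- NiceDAL
    intro i i' hlt hni hni'
    have hi : ¬ (i.val.1 < ξ ∧ i.val.2 < θ) := fun h => hni ((ker_iff hξ hθ i).mpr h)
    have hlv : i.val ≤ i'.val := le_def.mp hlt.le
    have hne : i.val ≠ i'.val := fun h => hlt.ne (Subtype.ext h)
    rcases not_and_or.mp hi with h1 | h2
    · have hi1 : i.val.1 = ξ := eq1 h1
      have hi'1 : i'.val.1 = i.val.1 := le_antisymm (le_trans (le1 i') hi1.ge) hlv.1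
      have h2' : i.val.2 < i'.val.2 :=
        lt_of_le_of_ne hlv.2 (fun h => hne (Prod.ext_iff.mpr ⟨hi'1.symm, h⟩))
      have hjm : ((0:Ordinal), i'.val.2) < (ξ, θ) := mem_iff.mpr ⟨hξ.le, le2 i', Or.inl hξ⟩
      refine ⟨⟨(0, i'.val.2), hjm⟩, ⟨?_, ?_⟩, ?_⟩
      · intro h
        exact absurd (le_def.mp h).2 (not_le.mpr h2')
      · intro h
        have hle0 : i.val.1 ≤ 0 := (le_def.mp h).1
        rw [hi1] at hle0
        exact absurd hle0 (not_le.mpr hξ)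
      · refine isLUB_iff.mpr (Prod.ext_iff.mpr ⟨?_, ?_⟩)
        · show i'.val.1 = i.val.1 ⊔ 0
          rw [hi'1, sup_eq_left.mpr zero_le]
        · show i'.val.2 = i.val.2 ⊔ i'.val.2
          rw [sup_eq_right.mpr hlv.2]
    · have hi2 : i.val.2 = θ := eq2 h2
      have hi'2 : i'.val.2 = i.val.2 := le_antisymm (le_trans (le2 i') hi2.ge) hlv.2
      have h1' : i.val.1 < i'.val.1 :=
        lt_of_le_of_ne hlv.1 (fun h => hne (Prod.ext_iff.mpr ⟨h, hi'2.symm⟩))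
      have hjm : (i'.val.1, (0:Ordinal)) < (ξ, θ) := mem_iff.mpr ⟨le1 i', hθ.le, Or.inr hθ⟩
      refine ⟨⟨(i'.val.1, 0), hjm⟩, ⟨?_, ?_⟩, ?_⟩
      · intro h
        exact absurd (le_def.mp h).1 (not_le.mpr h1')
      · intro h
        have hle0 : i.val.2 ≤ 0 := (le_def.mp h).2
        rw [hi2] at hle0
        exact absurd hle0 (not_le.mpr hθ)
      · refine isLUB_iff.mpr (Prod.ext_iff.mpr ⟨?_, ?_⟩)
        · show i'.val.1 = i.val.1 ⊔ i'.val.1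
          rw [sup_eq_right.mpr hlv.1]
        · show i'.val.2 = i.val.2 ⊔ 0
          rw [hi'2, sup_eq_left.mpr zero_le]
  · -- kernel equality
    exact Set.ext fun i => ker_iff hξ hθ i
  · -- L/R properties
    intro L R
    refine ⟨?_, ?_, ?_, ?_, ?_, ?_, ?_, ?_, ?_⟩
    · intro i hi j hji
      exact lt_of_le_of_lt (le_def.mp hji).1 hi
    · intro i hi j hji
      exact lt_of_le_of_lt (le_def.mp hji).2 hi
    · intro i hi j hj
      have hm := sup_mem (Or.inl ⟨hi, hj⟩)
      refine ⟨⟨_, hm⟩, isLUB_of hm, ?_⟩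
      show i.val.1 ⊔ j.val.1 < ξ
      exact sup_lt_iff.mpr ⟨hi, hj⟩
    · intro i hi j hj
      have hm := sup_mem (Or.inr ⟨hi, hj⟩)
      refine ⟨⟨_, hm⟩, isLUB_of hm, ?_⟩
      show i.val.2 ⊔ j.val.2 < θ
      exact sup_lt_iff.mpr ⟨hi, hj⟩
    · exact Set.eq_univ_of_forall fun i => lt_or i
    · rfl
    · constructor
      · intro _
        exact ⟨⟨(ξ, 0), mem_iff.mpr ⟨le_rfl, hθ.le, Or.inr hθ⟩⟩, hθ,
          fun hc => absurd hc.1 (lt_irrefl ξ)⟩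
      · intro _
        exact ⟨⟨(0, θ), mem_iff.mpr ⟨hξ.le, le_rfl, Or.inl hξ⟩⟩, hξ,
          fun hc => absurd hc.2 (lt_irrefl θ)⟩
    · rintro i hi j hj ⟨k, hk⟩
      have hi2 : ¬ i.val.2 < θ := fun h => hi.2 ⟨hi.1, h⟩
      have hj1 : ¬ j.val.1 < ξ := fun h => hj.2 ⟨h, hj.1⟩
      have := (hub_iff i j).mp
        ⟨k, hk.1 (Set.mem_insert _ _), hk.1 (Set.mem_insert_of_mem _ rfl)⟩
      rcases this with ⟨_, h⟩ | ⟨h, _⟩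
      exacts [hj1 h, hi2 h]
    · intro i hi j hj
      constructor
      · show i.val.1 ⊓ j.val.1 < ξ
        exact lt_of_le_of_lt inf_le_left hi
      · show i.val.2 ⊓ j.val.2 < θ
        exact lt_of_le_of_lt inf_le_right hj
end

section
/- For the lattice J_{ξ,θ} = {(ζ,η) : (ζ,η) ≤ (ξ,θ)} ⊆ κ × λ with ξ, θ > 0, the set of pure pairs Pure(J_{ξ,θ}) (the smallest set containing all diagonal pairs, all pairs arising from incomparable elements via meets and joins, and closed under the interval rule) consists exactly of those pairs ((ζ,η),(ζ',η')) with (ζ,η) ≤ (ζ',η') such that ζ = ζ' or η = η'. -/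
/-- The set of pure pairs of a (nice distributive almost-) lattice: the smallest
collection of pairs `i ≤ j` containing all diagonal pairs, the pairs arising from
incomparable elements via meets and joins, and closed under the interval rule. -/
inductive PurePair {α : Type*} [SemilatticeInf α] : α → α → Prop
  | refl (i : α) : PurePair i i
  | meet_left {i j : α} : ¬ i ≤ j → ¬ j ≤ i → PurePair (i ⊓ j) i
  | meet_right {i j : α} : ¬ i ≤ j → ¬ j ≤ i → PurePair (i ⊓ j) j
  | join_left {i j k : α} : ¬ i ≤ j → ¬ j ≤ i → IsLUB {i, j} k → PurePair i k
  | join_right {i j k : α} : ¬ i ≤ j → ¬ j ≤ i → IsLUB {i, j} k → PurePair j k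
  | interval {i j j' k : α} : i ≤ j → j ≤ j' → j' ≤ k → PurePair i k → PurePair j j'

/-- The initial segment `J_{ξ,θ} = {(ζ,η) : (ζ,η) ≤ (ξ,θ)}` of the coordinatewise
ordered product of the ordinals. -/
abbrev JSeg (ξ θ : Ordinal) : Type _ := {p : Ordinal × Ordinal // p ≤ (ξ, θ)}

noncomputable instance (ξ θ : Ordinal) : SemilatticeInf (JSeg ξ θ) :=
  Subtype.semilatticeInf fun _ _ hx _ => le_trans inf_le_left hx

section aux

variable {ξ θ : Ordinal}

lemma JSeg.le_iff {p q : JSeg ξ θ} :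
    p ≤ q ↔ p.val.1 ≤ q.val.1 ∧ p.val.2 ≤ q.val.2 := Iff.rfl

lemma JSeg.inf_val (p q : JSeg ξ θ) :
    (p ⊓ q).val = (p.val.1 ⊓ q.val.1, p.val.2 ⊓ q.val.2) := rfl

/-- In an incomparable pair, the meet shares a coordinate with each element. -/
lemma JSeg.meet_coord {i j : JSeg ξ θ} (_hij : ¬ i ≤ j) (hji : ¬ j ≤ i) :
    (i ⊓ j).val.1 = i.val.1 ∨ (i ⊓ j).val.2 = i.val.2 := by
  rcases le_total i.val.1 j.val.1 with h1 | h1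
  · exact Or.inl (inf_eq_left.mpr h1)
  rcases le_total i.val.2 j.val.2 with h2 | h2
  · exact Or.inr (inf_eq_left.mpr h2)
  exact absurd (JSeg.le_iff.mpr ⟨h1, h2⟩) hji

/-- The value of a least upper bound is the coordinatewise sup. -/
lemma JSeg.isLUB_val {i j k : JSeg ξ θ} (hk : IsLUB {i, j} k) :
    k.val = (i.val.1 ⊔ j.val.1, i.val.2 ⊔ j.val.2) := by
  have hik : i ≤ k := hk.1 (Set.mem_insert _ _)
  have hjk : j ≤ k := hk.1 (Set.mem_insert_of_mem _ rfl)
  have hsle : (i.val.1 ⊔ j.val.1, i.val.2 ⊔ j.val.2) ≤ ((ξ, θ) : Ordinal × Ordinal) :=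
    ⟨sup_le i.2.1 j.2.1, sup_le i.2.2 j.2.2⟩
  set s : JSeg ξ θ := ⟨(i.val.1 ⊔ j.val.1, i.val.2 ⊔ j.val.2), hsle⟩
  have hks : k ≤ s := hk.2 (by
    rintro x (rfl | rfl)
    · exact ⟨le_sup_left, le_sup_left⟩
    · exact ⟨le_sup_right, le_sup_right⟩)
  have hsk : s ≤ k := ⟨sup_le hik.1 hjk.1, sup_le hik.2 hjk.2⟩
  exact congrArg Subtype.val (le_antisymm hks hsk)

lemma JSeg.join_coord {i j k : JSeg ξ θ} (hij : ¬ i ≤ j) (_hji : ¬ j ≤ i)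
    (hk : IsLUB {i, j} k) :
    i.val.1 = k.val.1 ∨ i.val.2 = k.val.2 := by
  have hv := JSeg.isLUB_val hk
  rcases le_total j.val.1 i.val.1 with h1 | h1
  · left; rw [hv]; exact (sup_eq_left.mpr h1).symm
  rcases le_total j.val.2 i.val.2 with h2 | h2
  · right; rw [hv]; exact (sup_eq_left.mpr h2).symm
  exact absurd (JSeg.le_iff.mpr ⟨h1, h2⟩) hij

/-- Vertical segments `(ζ,0) — (ζ,θ)` are pure pairs. -/
lemma JSeg.pure_vert (hξ : 0 < ξ) (hθ : 0 < θ) (ζ : Ordinal) (hζ : ζ ≤ ξ) :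
    PurePair (⟨(ζ, 0), ⟨hζ, zero_le (a := θ)⟩⟩ : JSeg ξ θ)
      ⟨(ζ, θ), ⟨hζ, le_rfl⟩⟩ := by
  rcases eq_or_ne ζ 0 with rfl | hζ0
  · -- use the meet of incomparable (0, θ) and (ξ, 0)
    set i : JSeg ξ θ := ⟨(0, θ), ⟨hζ, le_rfl⟩⟩
    set j : JSeg ξ θ := ⟨(ξ, 0), ⟨le_rfl, zero_le (a := θ)⟩⟩
    have hij : ¬ i ≤ j := fun h => absurd h.2 (not_le.mpr hθ)
    have hji : ¬ j ≤ i := fun h => absurd h.1 (not_le.mpr hξ)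
    have h := PurePair.meet_left hij hji
    have hval : i ⊓ j = (⟨(0, 0), ⟨hζ, zero_le (a := θ)⟩⟩ : JSeg ξ θ) := by
      apply Subtype.ext
      rw [JSeg.inf_val]
      exact Prod.ext (inf_eq_left.mpr (zero_le (a := ξ)))
        (inf_eq_right.mpr (zero_le (a := θ)))
    rwa [hval] at h
  · -- ζ > 0 : use the join of incomparable (ζ, 0) and (0, θ)
    have hζpos : 0 < ζ := pos_iff_ne_zero.mpr hζ0
    set i : JSeg ξ θ := ⟨(ζ, 0), ⟨hζ, zero_le (a := θ)⟩⟩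
    set j : JSeg ξ θ := ⟨(0, θ), ⟨zero_le (a := ξ), le_rfl⟩⟩
    set k : JSeg ξ θ := ⟨(ζ, θ), ⟨hζ, le_rfl⟩⟩
    have hij : ¬ i ≤ j := fun h => absurd h.1 (not_le.mpr hζpos)
    have hji : ¬ j ≤ i := fun h => absurd h.2 (not_le.mpr hθ)
    have hk : IsLUB {i, j} k := by
      constructor
      · rintro x (rfl | rfl)
        · exact ⟨le_rfl, zero_le (a := θ)⟩
        · exact ⟨zero_le (a := ζ), le_rfl⟩
      · intro b hb
        exact ⟨(hb (Set.mem_insert _ _)).1, (hb (Set.mem_insert_of_mem _ rfl)).2⟩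
    exact PurePair.join_left hij hji hk

/-- Horizontal segments `(0,η) — (ξ,η)` are pure pairs. -/
lemma JSeg.pure_horiz (hξ : 0 < ξ) (hθ : 0 < θ) (η : Ordinal) (hη : η ≤ θ) :
    PurePair (⟨(0, η), ⟨zero_le (a := ξ), hη⟩⟩ : JSeg ξ θ)
      ⟨(ξ, η), ⟨le_rfl, hη⟩⟩ := by
  rcases eq_or_ne η 0 with rfl | hη0
  · set i : JSeg ξ θ := ⟨(ξ, 0), ⟨le_rfl, hη⟩⟩
    set j : JSeg ξ θ := ⟨(0, θ), ⟨zero_le (a := ξ), le_rfl⟩⟩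
    have hij : ¬ i ≤ j := fun h => absurd h.1 (not_le.mpr hξ)
    have hji : ¬ j ≤ i := fun h => absurd h.2 (not_le.mpr hθ)
    have h := PurePair.meet_left hij hji
    have hval : i ⊓ j = (⟨(0, 0), ⟨zero_le (a := ξ), hη⟩⟩ : JSeg ξ θ) := by
      apply Subtype.ext
      rw [JSeg.inf_val]
      exact Prod.ext (inf_eq_right.mpr (zero_le (a := ξ)))
        (inf_eq_left.mpr (zero_le (a := θ)))
    have h2 : PurePair (⟨(0, 0), ⟨zero_le (a := ξ), hη⟩⟩ : JSeg ξ θ) i := hval ▸ h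
    exact h2
  · have hηpos : 0 < η := pos_iff_ne_zero.mpr hη0
    set i : JSeg ξ θ := ⟨(0, η), ⟨zero_le (a := ξ), hη⟩⟩
    set j : JSeg ξ θ := ⟨(ξ, 0), ⟨le_rfl, zero_le (a := θ)⟩⟩
    set k : JSeg ξ θ := ⟨(ξ, η), ⟨le_rfl, hη⟩⟩
    have hij : ¬ i ≤ j := fun h => absurd h.2 (not_le.mpr hηpos)
    have hji : ¬ j ≤ i := fun h => absurd h.1 (not_le.mpr hξ)
    have hk : IsLUB {i, j} k := by
      constructor
      · rintro x (rfl | rfl)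
        · exact ⟨zero_le (a := ξ), le_rfl⟩
        · exact ⟨le_rfl, zero_le (a := η)⟩
      · intro b hb
        exact ⟨(hb (Set.mem_insert_of_mem _ rfl)).1, (hb (Set.mem_insert _ _)).2⟩
    exact PurePair.join_left hij hji hk

end aux

/-- For `ξ, θ > 0`, the pure pairs of `J_{ξ,θ}` are exactly the pairs
`(ζ,η) ≤ (ζ',η')` with `ζ = ζ'` or `η = η'`. -/
theorem stmt16 (ξ θ : Ordinal) (hξ : 0 < ξ) (hθ : 0 < θ)
    (p q : JSeg ξ θ) :
    PurePair p q ↔ (p ≤ q ∧ (p.val.1 = q.val.1 ∨ p.val.2 = q.val.2)) := by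
  constructor
  · intro h
    induction h with
    | refl i => exact ⟨le_rfl, Or.inl rfl⟩
    | meet_left hij hji => exact ⟨inf_le_left, JSeg.meet_coord hij hji⟩
    | meet_right hij hji =>
        rename_i i j
        have := JSeg.meet_coord hji hij
        rw [inf_comm i j] at *
        exact ⟨inf_le_left, this⟩
    | join_left hij hji hk =>
        exact ⟨hk.1 (Set.mem_insert _ _), JSeg.join_coord hij hji hk⟩
    | join_right hij hji hk =>
        refine ⟨hk.1 (Set.mem_insert_of_mem _ rfl), ?_⟩
        apply JSeg.join_coord hji hij
        rwa [Set.pair_comm]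
    | interval h1 h2 h3 _ ih =>
        refine ⟨h2, ?_⟩
        rcases ih.2 with hc | hc
        · exact Or.inl (le_antisymm h2.1 (h3.1.trans (hc.ge.trans h1.1)))
        · exact Or.inr (le_antisymm h2.2 (h3.2.trans (hc.ge.trans h1.2)))
  · rintro ⟨hpq, hc | hc⟩
    · -- vertical: first coordinates equal
      have hv := JSeg.pure_vert hξ hθ p.val.1 p.2.1
      refine PurePair.interval (j := p) (j' := q) ?_ hpq ?_ hv
      · exact ⟨le_rfl, zero_le (a := _)⟩
      · exact ⟨hc.ge, q.2.2⟩
    · have hv := JSeg.pure_horiz hξ hθ p.val.2 p.2.2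
      refine PurePair.interval (j := p) (j' := q) ?_ hpq ?_ hv
      · exact ⟨zero_le (a := _), le_rfl⟩
      · exact ⟨q.2.1, hc.ge⟩
end

section
/- Let I be a nice distributive almost-lattice without maximal element, let ℓ ∉ I, and let J = I ∪ {ℓ} with i ≤ ℓ for all i ∈ I. Then Pure(J) = Pure(I) ∪ {(i, ℓ) : i ∈ I \ ker(I)} ∪ {(ℓ, ℓ)}. -/
/-!
With `J = WithTop I` and `ℓ = ⊤`, a pure pair of `J` not involving `ℓ` is already pure in `I`:
below `ℓ` the orders, meets and existing joins of `I` and `J` agree. A join equal to `ℓ` comes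
from two elements with no common upper bound in `I`, which therefore lie outside `ker(I)`;
conversely each `i ∉ ker(I)` has such a partner, so `(i, ℓ)` is pure. The one real point is that
the right-hand side is closed under the interval rule: for `a ≤ c ≤ d` with `a ∉ ker(I)` also
`c, d ∉ ker(I)` (the complement of the kernel is an up-set), and niceness writes `d = c ∨ j` with
`j` incomparable to `c`.
-/

section WithTop

variable {α : Type*} [Preorder α]

theorem WithTop.isLUB_pair_coe_iff_s17 {a b c : α} :
    IsLUB {(a : WithTop α), (b : WithTop α)} (c : WithTop α) ↔ IsLUB {a, b} c := by
  simp [IsLUB, IsLeast, upperBounds_insert, lowerBounds, WithTop.forall]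

theorem WithTop.isLUB_pair_top_iff_s17 {a b : α} :
    IsLUB {(a : WithTop α), (b : WithTop α)} ⊤ ↔ ¬ ∃ k, a ≤ k ∧ b ≤ k := by
  simp [IsLUB, IsLeast, upperBounds_insert, lowerBounds, WithTop.forall]

theorem WithTop.exists_coe_of_not_le_of_not_le {x y : WithTop α} (hxy : ¬ x ≤ y)
    (hyx : ¬ y ≤ x) : ∃ a b : α, x = a ∧ y = b ∧ ¬ a ≤ b ∧ ¬ b ≤ a := by
  lift x to α using fun hx => hyx (hx ▸ le_top)
  lift y to α using fun hy => hxy (hy ▸ le_top)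
  exact ⟨x, y, rfl, rfl, by simpa using hxy, by simpa using hyx⟩

end WithTop

namespace DistribAlmostLattice

def ker (α : Type*) [Preorder α] : Set α :=
  {a | ∀ j : α, ∃ k, IsLUB {a, j} k}

theorem notMem_ker_of_not_exists_ub {α : Type*} [Preorder α] {a b : α}
    (hab : ¬ ∃ k, a ≤ k ∧ b ≤ k) : a ∉ ker α := fun hker =>
  let ⟨k, hk⟩ := hker b
  hab ⟨k, hk.1 (Set.mem_insert a _), hk.1 (Set.mem_insert_of_mem a rfl)⟩

variable {α : Type*} [SemilatticeInf α]

theorem exists_not_exists_ub_of_notMem_ker (h : DistribAlmostLattice α) {a : α}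
    (ha : a ∉ ker α) : ∃ b : α, ¬ ∃ k, a ≤ k ∧ b ≤ k := by
  simp only [ker, Set.mem_ofPred_eq, not_forall] at ha
  obtain ⟨b, hb⟩ := ha
  exact ⟨b, fun hub => hb (h.join_exists a b hub)⟩

theorem notMem_ker_of_le (h : DistribAlmostLattice α) {a c : α} (ha : a ∉ ker α)
    (hac : a ≤ c) : c ∉ ker α := by
  obtain ⟨b, hb⟩ := h.exists_not_exists_ub_of_notMem_ker ha
  exact notMem_ker_of_not_exists_ub fun ⟨k, hck, hbk⟩ => hb ⟨k, hac.trans hck, hbk⟩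

end DistribAlmostLattice

open DistribAlmostLattice

namespace PurePair

variable {α : Type*} [SemilatticeInf α]

theorem of_notMem_ker (h : DistribAlmostLattice α) (hnice : NiceDAL α) {c d : α}
    (hc : c ∉ ker α) (hcd : c ≤ d) : PurePair c d := by
  rcases hcd.eq_or_lt with rfl | hlt
  · exact refl c
  · obtain ⟨j, ⟨hjc, hcj⟩, hlub⟩ := hnice c d hlt hc (h.notMem_ker_of_le hc hcd)
    exact join_left hcj hjc hlub

theorem coe {a b : α} (hab : PurePair a b) : PurePair (a : WithTop α) (b : WithTop α) := by
  induction hab with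
  | refl i => exact refl _
  | meet_left hij hji =>
    rw [WithTop.coe_inf]
    exact meet_left (by simpa using hij) (by simpa using hji)
  | meet_right hij hji =>
    rw [WithTop.coe_inf]
    exact meet_right (by simpa using hij) (by simpa using hji)
  | join_left hij hji hk =>
    exact join_left (by simpa using hij) (by simpa using hji) (WithTop.isLUB_pair_coe_iff_s17.2 hk)
  | join_right hij hji hk =>
    exact join_right (by simpa using hij) (by simpa using hji) (WithTop.isLUB_pair_coe_iff_s17.2 hk)
  | interval hij hjj' hj'k _ ih =>
    exact interval (WithTop.coe_le_coe.2 hij) (WithTop.coe_le_coe.2 hjj')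
      (WithTop.coe_le_coe.2 hj'k) ih

theorem coe_top (h : DistribAlmostLattice α) {a : α} (ha : a ∉ ker α) :
    PurePair (a : WithTop α) ⊤ := by
  obtain ⟨b, hb⟩ := h.exists_not_exists_ub_of_notMem_ker ha
  have hab : ¬ a ≤ b := fun hab => hb ⟨b, hab, le_rfl⟩
  have hba : ¬ b ≤ a := fun hba => hb ⟨a, le_rfl, hba⟩
  exact join_left (by simpa using hab) (by simpa using hba) (WithTop.isLUB_pair_top_iff_s17.2 hb)

end PurePair

inductive WithTopPurePair {α : Type*} [SemilatticeInf α] : WithTop α → WithTop α → Prop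
  | coe {a b : α} : PurePair a b → WithTopPurePair a b
  | coe_top {a : α} : a ∉ ker α → WithTopPurePair a ⊤
  | top : WithTopPurePair ⊤ ⊤

namespace WithTopPurePair

variable {α : Type*} [SemilatticeInf α]

theorem of_isLUB {a b : α} {k : WithTop α} (hab : ¬ a ≤ b) (hba : ¬ b ≤ a)
    (hk : IsLUB {(a : WithTop α), (b : WithTop α)} k) : WithTopPurePair a k := by
  cases k using WithTop.recTopCoe with
  | top => exact coe_top (notMem_ker_of_not_exists_ub (WithTop.isLUB_pair_top_iff_s17.1 hk))
  | coe c => exact coe (.join_left hab hba (WithTop.isLUB_pair_coe_iff_s17.1 hk))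

theorem interval (h : DistribAlmostLattice α) (hnice : NiceDAL α) {p j j' q : WithTop α}
    (hpj : p ≤ j) (hjj' : j ≤ j') (hj'q : j' ≤ q) (hpq : WithTopPurePair p q) :
    WithTopPurePair j j' := by
  cases hpq with
  | coe hab =>
    lift j' to α using ne_top_of_le_ne_top WithTop.coe_ne_top hj'q
    lift j to α using ne_top_of_le_ne_top WithTop.coe_ne_top hjj'
    simp only [WithTop.coe_le_coe] at hpj hjj' hj'q
    exact coe (.interval hpj hjj' hj'q hab)
  | @coe_top a ha =>
    cases j using WithTop.recTopCoe with
    | top => exact top_le_iff.1 hjj' ▸ top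
    | coe c =>
      have hc : c ∉ ker α := h.notMem_ker_of_le ha (WithTop.coe_le_coe.1 hpj)
      cases j' using WithTop.recTopCoe with
      | top => exact coe_top hc
      | coe d => exact coe (.of_notMem_ker h hnice hc (WithTop.coe_le_coe.1 hjj'))
  | top =>
    obtain rfl := top_le_iff.1 hpj
    exact top_le_iff.1 hjj' ▸ top

end WithTopPurePair

theorem PurePair.withTopPurePair {α : Type*} [SemilatticeInf α] (h : DistribAlmostLattice α)
    (hnice : NiceDAL α) {p q : WithTop α} (hpq : PurePair p q) : WithTopPurePair p q := by
  induction hpq with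
  | refl p =>
    cases p using WithTop.recTopCoe with
    | top => exact .top
    | coe a => exact .coe (.refl a)
  | meet_left hij hji =>
    obtain ⟨a, b, rfl, rfl, hab, hba⟩ := WithTop.exists_coe_of_not_le_of_not_le hij hji
    exact WithTop.coe_inf a b ▸ .coe (.meet_left hab hba)
  | meet_right hij hji =>
    obtain ⟨a, b, rfl, rfl, hab, hba⟩ := WithTop.exists_coe_of_not_le_of_not_le hij hji
    exact WithTop.coe_inf a b ▸ .coe (.meet_right hab hba)
  | join_left hij hji hk =>
    obtain ⟨a, b, rfl, rfl, hab, hba⟩ := WithTop.exists_coe_of_not_le_of_not_le hij hji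
    exact .of_isLUB hab hba hk
  | join_right hij hji hk =>
    obtain ⟨a, b, rfl, rfl, hab, hba⟩ := WithTop.exists_coe_of_not_le_of_not_le hij hji
    exact .of_isLUB hba hab (Set.pair_comm _ _ ▸ hk)
  | interval hij hjj' hj'k _ ih => exact ih.interval h hnice hij hjj' hj'k

theorem PurePair.withTop_iff {α : Type*} [SemilatticeInf α] (h : DistribAlmostLattice α)
    (hnice : NiceDAL α) {p q : WithTop α} : PurePair p q ↔ WithTopPurePair p q := by
  refine ⟨withTopPurePair h hnice, fun hpq => ?_⟩
  cases hpq with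
  | coe hab => exact hab.coe
  | coe_top ha => exact .coe_top h ha
  | top => exact .refl ⊤

theorem stmt17_general {α : Type*} [SemilatticeInf α] (h : DistribAlmostLattice α)
    (hnice : NiceDAL α)
    (p q : WithTop α) :
    PurePair p q ↔
      ((∃ a b : α, p = (a : WithTop α) ∧ q = (b : WithTop α) ∧ PurePair a b) ∨
       (∃ a : α, p = (a : WithTop α) ∧ q = ⊤ ∧ ¬ (∀ j : α, ∃ k, IsLUB {a, j} k)) ∨
       (p = ⊤ ∧ q = ⊤)) := by
  rw [PurePair.withTop_iff h hnice]
  constructor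
  · rintro (@⟨a, b, hab⟩ | @⟨a, ha⟩ | _)
    exacts [.inl ⟨a, b, rfl, rfl, hab⟩, .inr (.inl ⟨a, rfl, rfl, ha⟩), .inr (.inr ⟨rfl, rfl⟩)]
  · rintro (⟨a, b, rfl, rfl, hab⟩ | ⟨a, rfl, rfl, ha⟩ | ⟨rfl, rfl⟩)
    exacts [.coe hab, .coe_top ha, .top]

/-- Let `I` be a nice distributive almost-lattice without maximal element, and
`J = I ∪ {ℓ}` (modelled as `WithTop I`). Then
`Pure(J) = Pure(I) ∪ {(i,ℓ) : i ∈ I \ ker(I)} ∪ {(ℓ,ℓ)}`. -/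
theorem stmt17 {α : Type*} [SemilatticeInf α] (h : DistribAlmostLattice α)
    (hnice : NiceDAL α) (hnomax : ∀ i : α, ∃ j, i < j)
    (p q : WithTop α) :
    PurePair p q ↔
      ((∃ a b : α, p = (a : WithTop α) ∧ q = (b : WithTop α) ∧ PurePair a b) ∨
       (∃ a : α, p = (a : WithTop α) ∧ q = ⊤ ∧ ¬ (∀ j : α, ∃ k, IsLUB {a, j} k)) ∨
       (p = ⊤ ∧ q = ⊤)) :=
  stmt17_general h hnice p q
end

section
/- In ZFC: min{cov(M), non(M)} ≥ ℵ₁ and, using the existence of a comeager Gδ null set and translation invariance of the meager and null ideals on 2^ω (or ℝ), cov(N) ≤ non(M) and cov(M) ≤ non(N) (Rothberger's theorem). -/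
open Cardinal MeasureTheory

/-- The covering number of the family of sets satisfying `P`: the least cardinality of a
family of such sets covering the real line. -/
noncomputable def covNum (P : Set ℝ → Prop) : Cardinal :=
  sInf {c : Cardinal | ∃ F : Set (Set ℝ),
    (∀ s ∈ F, P s) ∧ ⋃₀ F = Set.univ ∧ Cardinal.mk ↥F = c}

/-- The uniformity of the family of sets satisfying `P`: the least cardinality of a set
of reals not satisfying `P`. -/
noncomputable def nonNum (P : Set ℝ → Prop) : Cardinal :=
  sInf {c : Cardinal | ∃ s : Set ℝ, ¬ P s ∧ Cardinal.mk ↥s = c}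

open Filter Set Pointwise in
private lemma aux_null_comeagre : ∃ A : Set ℝ, MeasurableSet A ∧ A ∈ residual ℝ ∧ volume A = 0 := by
  obtain ⟨u, hu, v, hv, huv⟩ := Filter.disjoint_iff.mp Real.disjoint_residual_ae
  obtain ⟨t, htu, htG, htd⟩ := mem_residual.mp hu
  refine ⟨t, htG.measurableSet, residual_of_dense_Gδ htG htd, ?_⟩
  have : t ⊆ vᶜ := fun x hx hxv => (Set.disjoint_left.mp huv (htu hx)) hxv
  exact measure_mono_null this (mem_ae_iff.mp hv)

open Filter in
private lemma aux_meagre_sUnion {F : Set (Set ℝ)} (hc : F.Countable) (h : ∀ s ∈ F, IsMeagre s) :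
    IsMeagre (⋃₀ F) := by
  rw [IsMeagre, Set.compl_sUnion]
  exact (countable_sInter_mem (hc.image _)).mpr (by rintro _ ⟨t, ht, rfl⟩; exact h t ht)

private lemma aux_isMeagre_singleton (x : ℝ) : IsMeagre ({x} : Set ℝ) :=
  residual_of_dense_open isOpen_compl_singleton (dense_compl_singleton x)

private lemma aux_countable_meagre {s : Set ℝ} (hs : s.Countable) : IsMeagre s := by
  have h : s = ⋃₀ ((fun x => ({x} : Set ℝ)) '' s) := by simp
  rw [h]
  exact aux_meagre_sUnion (hs.image _) (by rintro _ ⟨x, -, rfl⟩; exact aux_isMeagre_singleton x)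

private lemma aux_univ_not_meagre : ¬ IsMeagre (Set.univ : Set ℝ) := fun h => by
  rw [IsMeagre, Set.compl_univ] at h
  exact (dense_of_mem_residual h).nonempty.ne_empty rfl

private lemma aux_meagre_sub_preimage (x : ℝ) {M : Set ℝ} (h : IsMeagre M) :
    IsMeagre ((fun y => x - y) ⁻¹' M) := by
  have hh : IsOpenMap (fun y : ℝ => x - y) := by
    have := ((Homeomorph.neg ℝ).trans (Homeomorph.addLeft x)).isOpenMap
    convert this using 1
    ext y; simp [Homeomorph.trans_apply, sub_eq_add_neg]
  exact h.preimage_of_isOpenMap (by continuity) hh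

private lemma aux_meagre_addLeft_preimage (s : ℝ) {M : Set ℝ} (h : IsMeagre M) :
    IsMeagre ((fun y => s + y) ⁻¹' M) := by
  have hh : IsOpenMap (fun y : ℝ => s + y) := (Homeomorph.addLeft s).isOpenMap
  exact h.preimage_of_isOpenMap (by continuity) hh

open Set Pointwise in
private lemma aux_vadd_eq_preimage (s : ℝ) (M : Set ℝ) :
    s +ᵥ M = (fun y => -s + y) ⁻¹' M := by
  ext y; simp [Set.mem_vadd_set_iff_neg_vadd_mem]

/-- In ZFC: `min{cov(M), non(M)} ≥ ℵ₁`, and Rothberger's theorem: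
`cov(N) ≤ non(M)` and `cov(M) ≤ non(N)`. -/
theorem stmt18 :
    Cardinal.aleph 1 ≤ covNum IsMeagre ∧
    Cardinal.aleph 1 ≤ nonNum IsMeagre ∧
    covNum (fun s => volume s = 0) ≤ nonNum IsMeagre ∧
    covNum IsMeagre ≤ nonNum (fun s => volume s = 0) := by
  classical
  open Set Pointwise in
  obtain ⟨A, hAm, hAres, hA0⟩ := aux_null_comeagre
  have hAc_meagre : IsMeagre Aᶜ := by rw [IsMeagre, compl_compl]; exact hAres
  refine ⟨?_, ?_, ?_, ?_⟩
  · -- ℵ₁ ≤ cov(M)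
    refine le_csInf ?_ ?_
    · refine ⟨Cardinal.mk ↥(Set.range fun x : ℝ => ({x} : Set ℝ)),
        Set.range fun x : ℝ => ({x} : Set ℝ), ?_, ?_, rfl⟩
      · rintro _ ⟨x, rfl⟩; exact aux_isMeagre_singleton x
      · ext x; simp
    · rintro c ⟨F, hF, hcov, rfl⟩
      by_contra h
      push_neg at h
      have hc : F.Countable := (Cardinal.countable_iff_lt_aleph_one F).mpr h
      exact aux_univ_not_meagre (hcov ▸ aux_meagre_sUnion hc hF)
  · -- ℵ₁ ≤ non(M)
    refine le_csInf ⟨Cardinal.mk ↥(Set.univ : Set ℝ), Set.univ, aux_univ_not_meagre, rfl⟩ ?_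
    rintro c ⟨s, hs, rfl⟩
    by_contra h
    push_neg at h
    exact hs (aux_countable_meagre ((Cardinal.countable_iff_lt_aleph_one s).mpr h))
  · -- cov(N) ≤ non(M)
    refine le_csInf ⟨Cardinal.mk ↥(Set.univ : Set ℝ), Set.univ, aux_univ_not_meagre, rfl⟩ ?_
    rintro c ⟨S, hS, rfl⟩
    open Set Pointwise in
    have hmem : ∀ x : ℝ, ∃ s ∈ S, x ∈ s +ᵥ A := by
      intro x
      by_contra hx
      push_neg at hx
      have hsub : S ⊆ (fun y => x - y) ⁻¹' Aᶜ := by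
        intro s hs
        have h1 : x ∉ s +ᵥ A := hx s hs
        rw [Set.mem_vadd_set_iff_neg_vadd_mem] at h1
        have : -s + x = x - s := by ring
        simpa [this] using h1
      exact hS ((aux_meagre_sub_preimage x hAc_meagre).mono hsub)
    have h1 : covNum (fun s => volume s = 0) ≤ Cardinal.mk ↥((fun s => s +ᵥ A) '' S) := by
      refine csInf_le' ⟨(fun s => s +ᵥ A) '' S, ?_, ?_, rfl⟩
      · rintro _ ⟨s, -, rfl⟩
        show volume (s +ᵥ A) = 0
        rw [aux_vadd_eq_preimage, measure_preimage_add, hA0]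
      · ext x
        simp only [Set.mem_sUnion, Set.mem_univ, iff_true]
        obtain ⟨s, hsS, hx⟩ := hmem x
        exact ⟨s +ᵥ A, ⟨s, hsS, rfl⟩, hx⟩
    exact h1.trans Cardinal.mk_image_le
  · -- cov(M) ≤ non(N)
    refine le_csInf ⟨Cardinal.mk ↥(Set.univ : Set ℝ), Set.univ, by simp, rfl⟩ ?_
    rintro c ⟨S, hS, rfl⟩
    open Set Pointwise in
    have hmem : ∀ x : ℝ, ∃ s ∈ S, x ∈ s +ᵥ Aᶜ := by
      intro x
      by_contra hx
      push_neg at hx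
      have hsub : S ⊆ (fun y => x - y) ⁻¹' A := by
        intro s hs
        have h1 : x ∉ s +ᵥ Aᶜ := hx s hs
        rw [Set.mem_vadd_set_iff_neg_vadd_mem] at h1
        have h2 : -s + x = x - s := by ring
        simp only [vadd_eq_add, h2] at h1
        simpa using h1
      have h0 : volume ((fun y => x - y) ⁻¹' A) = 0 := by
        rw [(Measure.measurePreserving_sub_left volume x).measure_preimage
          hAm.nullMeasurableSet, hA0]
      exact hS (measure_mono_null hsub h0)
    have h1 : covNum IsMeagre ≤ Cardinal.mk ↥((fun s => s +ᵥ Aᶜ) '' S) := by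
      refine csInf_le' ⟨(fun s => s +ᵥ Aᶜ) '' S, ?_, ?_, rfl⟩
      · rintro _ ⟨s, -, rfl⟩
        show IsMeagre (s +ᵥ Aᶜ)
        rw [aux_vadd_eq_preimage]
        exact aux_meagre_addLeft_preimage (-s) hAc_meagre
      · ext x
        simp only [Set.mem_sUnion, Set.mem_univ, iff_true]
        obtain ⟨s, hsS, hx⟩ := hmem x
        exact ⟨s +ᵥ Aᶜ, ⟨s, hsS, rfl⟩, hx⟩
    exact h1.trans Cardinal.mk_image_le
end

section
/- If A_amal is the amalgamation of complete Boolean algebras A₀ and A₁ over a common complete subalgebra A_{0∧1} (conditions are pairs (a₀, a₁) with nonzero a₀ ∈ A₀, a₁ ∈ A₁ and h_{0,0∧1}(a₀) · h_{1,0∧1}(a₁) ≠ 0, ordered coordinatewise), then A₀ and A₁ both embed completely into the completion of this forcing via a₀ ↦ (a₀, 1) and a₁ ↦ (1, a₁), and the resulting square diagram is correct. -/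
/-- The projection associated with a complete embedding `e : C → A`:
`h(a) = ∏ {c : a ≤ e(c)}`. -/
noncomputable def projEmb {C A : Type*} [CompleteBooleanAlgebra C]
    [CompleteBooleanAlgebra A] (e : C → A) (a : A) : C :=
  sInf {c | a ≤ e c}

/-- The amalgamation forcing of `A₀` and `A₁` over a common complete subalgebra `C`:
pairs `(a₀, a₁)` of nonzero elements whose projections to `C` are compatible, ordered
coordinatewise. -/
def amalSet {C A0 A1 : Type*} [CompleteBooleanAlgebra C] [CompleteBooleanAlgebra A0]
    [CompleteBooleanAlgebra A1] (e0 : C → A0) (e1 : C → A1) : Set (A0 × A1) :=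
  {d | d.1 ≠ ⊥ ∧ d.2 ≠ ⊥ ∧ projEmb e0 d.1 ⊓ projEmb e1 d.2 ≠ ⊥}

/-!
To refine a condition `(a₀, a₁)` below some `m` of a maximal antichain `M ⊆ A₀`, put
`c = h₁(a₁)`. Since `c ⊓ h₀(a₀) ≠ 0`, also `a₀ ⊓ e₀(c) ≠ 0`, so some `m ∈ M` meets it; the
meet `a₀' = m ⊓ a₀ ⊓ e₀(c)` lies below `e₀(c)`, hence `h₀(a₀') ≤ h₁(a₁)`, and `(a₀', a₁)` is
again a condition. The case of `A₁` is the same after swapping coordinates, and correctness is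
immediate because `(a₀, a₁)` itself is a condition.
-/

section projEmb

variable {C A : Type*} [CompleteBooleanAlgebra C] [CompleteBooleanAlgebra A] {e : C → A}

lemma projEmb_le {a : A} {c : C} (h : a ≤ e c) : projEmb e a ≤ c :=
  sInf_le h

lemma le_map_projEmb (hinf : ∀ s : Set C, e (sInf s) = ⨅ c ∈ s, e c) (a : A) :
    a ≤ e (projEmb e a) := by
  rw [projEmb, hinf]
  exact le_iInf₂ fun _ hc => hc

lemma map_bot_of_map_sInf_of_map_compl (hinf : ∀ s : Set C, e (sInf s) = ⨅ c ∈ s, e c)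
    (hcompl : ∀ c : C, e cᶜ = (e c)ᶜ) : e ⊥ = ⊥ := by
  have htop : e ⊤ = ⊤ := by simpa using hinf ∅
  rw [← compl_top, hcompl, htop, compl_top]

lemma projEmb_ne_bot (hinf : ∀ s : Set C, e (sInf s) = ⨅ c ∈ s, e c)
    (hcompl : ∀ c : C, e cᶜ = (e c)ᶜ) {a : A} (ha : a ≠ ⊥) : projEmb e a ≠ ⊥ := by
  intro h
  have := le_map_projEmb hinf a
  rw [h, map_bot_of_map_sInf_of_map_compl hinf hcompl] at this
  exact ha (le_bot_iff.mp this)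

lemma inf_map_ne_bot_of_inf_projEmb_ne_bot (hcompl : ∀ c : C, e cᶜ = (e c)ᶜ) {a : A} {c : C}
    (h : c ⊓ projEmb e a ≠ ⊥) : a ⊓ e c ≠ ⊥ := by
  intro hac
  have : a ≤ e cᶜ := by
    rw [hcompl]
    exact le_compl_iff_disjoint_right.mpr (disjoint_iff.mpr hac)
  exact h (disjoint_iff.mp (disjoint_compl_right.mono_right (projEmb_le this)))

end projEmb

section amalSet

variable {C A0 A1 : Type*} [CompleteBooleanAlgebra C] [CompleteBooleanAlgebra A0]
  [CompleteBooleanAlgebra A1] {e0 : C → A0} {e1 : C → A1}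

lemma swap_mem_amalSet {d : A0 × A1} (hd : d ∈ amalSet e0 e1) : d.swap ∈ amalSet e1 e0 :=
  ⟨hd.2.1, hd.1, by rw [inf_comm]; exact hd.2.2⟩

lemma exists_mem_amalSet_le_fst_le (hinf0 : ∀ s : Set C, e0 (sInf s) = ⨅ c ∈ s, e0 c)
    (hcompl0 : ∀ c : C, e0 cᶜ = (e0 c)ᶜ) {M : Set A0}
    (hM : ∀ a : A0, a ≠ ⊥ → ∃ m ∈ M, m ⊓ a ≠ ⊥) {d : A0 × A1} (hd : d ∈ amalSet e0 e1) :
    ∃ m ∈ M, ∃ d' ∈ amalSet e0 e1, d' ≤ d ∧ d'.1 ≤ m := by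
  obtain ⟨-, hd1, hdc⟩ := hd
  set c := projEmb e1 d.2
  have hmeet : d.1 ⊓ e0 c ≠ ⊥ :=
    inf_map_ne_bot_of_inf_projEmb_ne_bot hcompl0 (by rwa [inf_comm])
  obtain ⟨m, hm, hmd⟩ := hM _ hmeet
  set a := m ⊓ (d.1 ⊓ e0 c)
  have ha : a ≠ ⊥ := hmd
  have hac : projEmb e0 a ≤ c := projEmb_le (inf_le_right.trans inf_le_right)
  refine ⟨m, hm, (a, d.2), ⟨ha, hd1, ?_⟩, ⟨inf_le_right.trans inf_le_left, le_rfl⟩, inf_le_left⟩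
  rw [inf_of_le_left hac]
  exact projEmb_ne_bot hinf0 hcompl0 ha

end amalSet

theorem stmt19_general {C A0 A1 : Type*} [CompleteBooleanAlgebra C] [CompleteBooleanAlgebra A0]
    [CompleteBooleanAlgebra A1] (e0 : C → A0) (e1 : C → A1)
    (hinf0 : ∀ s : Set C, e0 (sInf s) = ⨅ c ∈ s, e0 c)
    (hinf1 : ∀ s : Set C, e1 (sInf s) = ⨅ c ∈ s, e1 c)
    (hcompl0 : ∀ c : C, e0 cᶜ = (e0 c)ᶜ)
    (hcompl1 : ∀ c : C, e1 cᶜ = (e1 c)ᶜ) :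
    (∀ M : Set A0, (∀ m ∈ M, m ≠ ⊥) → M.Pairwise (fun x y => x ⊓ y = ⊥) →
      (∀ a : A0, a ≠ ⊥ → ∃ m ∈ M, m ⊓ a ≠ ⊥) →
      ∀ d ∈ amalSet e0 e1, ∃ m ∈ M, ∃ d' ∈ amalSet e0 e1, d' ≤ d ∧ d'.1 ≤ m) ∧
    (∀ M : Set A1, (∀ m ∈ M, m ≠ ⊥) → M.Pairwise (fun x y => x ⊓ y = ⊥) →
      (∀ a : A1, a ≠ ⊥ → ∃ m ∈ M, m ⊓ a ≠ ⊥) →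
      ∀ d ∈ amalSet e0 e1, ∃ m ∈ M, ∃ d' ∈ amalSet e0 e1, d' ≤ d ∧ d'.2 ≤ m) ∧
    (∀ (a0 : A0) (a1 : A1), a0 ≠ ⊥ → a1 ≠ ⊥ →
      projEmb e0 a0 ⊓ projEmb e1 a1 ≠ ⊥ →
      ∃ d ∈ amalSet e0 e1, d.1 ≤ a0 ∧ d.2 ≤ a1) := by
  refine ⟨fun M _ _ hM d hd => exists_mem_amalSet_le_fst_le hinf0 hcompl0 hM hd,
    fun M _ _ hM d hd => ?_, fun a0 a1 h0 h1 hc => ⟨(a0, a1), ⟨h0, h1, hc⟩, le_rfl, le_rfl⟩⟩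
  obtain ⟨m, hm, d', hd', hle, hm'⟩ :=
    exists_mem_amalSet_le_fst_le hinf1 hcompl1 hM (swap_mem_amalSet hd)
  exact ⟨m, hm, d'.swap, swap_mem_amalSet hd', Prod.swap_le_swap.mpr hle, hm'⟩

/-- `A₀` and `A₁` embed completely into the amalgamation over `A_{0∧1}` via
`a₀ ↦ (a₀, 1)` and `a₁ ↦ (1, a₁)` (maximal antichains are mapped to predense sets), and
the resulting square diagram is correct: if `h₀(a₀) ⊓ h₁(a₁) ≠ 0` then `a₀` and `a₁`
are compatible in the amalgamation. -/
theorem stmt19 {C A0 A1 : Type*} [CompleteBooleanAlgebra C] [CompleteBooleanAlgebra A0]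
    [CompleteBooleanAlgebra A1] (e0 : C → A0) (e1 : C → A1)
    (hinj0 : Function.Injective e0) (hinj1 : Function.Injective e1)
    (hinf0 : ∀ s : Set C, e0 (sInf s) = ⨅ c ∈ s, e0 c)
    (hinf1 : ∀ s : Set C, e1 (sInf s) = ⨅ c ∈ s, e1 c)
    (hsup0 : ∀ s : Set C, e0 (sSup s) = ⨆ c ∈ s, e0 c)
    (hsup1 : ∀ s : Set C, e1 (sSup s) = ⨆ c ∈ s, e1 c)
    (hcompl0 : ∀ c : C, e0 cᶜ = (e0 c)ᶜ)
    (hcompl1 : ∀ c : C, e1 cᶜ = (e1 c)ᶜ) :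
    (∀ M : Set A0, (∀ m ∈ M, m ≠ ⊥) → M.Pairwise (fun x y => x ⊓ y = ⊥) →
      (∀ a : A0, a ≠ ⊥ → ∃ m ∈ M, m ⊓ a ≠ ⊥) →
      ∀ d ∈ amalSet e0 e1, ∃ m ∈ M, ∃ d' ∈ amalSet e0 e1, d' ≤ d ∧ d'.1 ≤ m) ∧
    (∀ M : Set A1, (∀ m ∈ M, m ≠ ⊥) → M.Pairwise (fun x y => x ⊓ y = ⊥) →
      (∀ a : A1, a ≠ ⊥ → ∃ m ∈ M, m ⊓ a ≠ ⊥) →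
      ∀ d ∈ amalSet e0 e1, ∃ m ∈ M, ∃ d' ∈ amalSet e0 e1, d' ≤ d ∧ d'.2 ≤ m) ∧
    (∀ (a0 : A0) (a1 : A1), a0 ≠ ⊥ → a1 ≠ ⊥ →
      projEmb e0 a0 ⊓ projEmb e1 a1 ≠ ⊥ →
      ∃ d ∈ amalSet e0 e1, d.1 ≤ a0 ∧ d.2 ≤ a1) :=
  stmt19_general e0 e1 hinf0 hinf1 hcompl0 hcompl1
end
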